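/- arXiv:1802.07529 — 8 statements merged into one kernel-verified Lean document; each statement's English description precedes it below -/
import Mathlib

section
/- Let K₁ and K₂ be nonempty closed convex subsets of a real Hilbert space H, with metric projections P₁ onto K₁ and P₂ onto K₂. Then a point x ∈ H satisfies x = P₁(P₂(x)) if and only if x ∈ K₁ and dist(x, K₂) = dist(K₁, K₂); that is, the fixed points of the composition P₁ ∘ P₂ are exactly the points of K₁ nearest to K₂. -/
open RealInnerProductSpace

/-- `P` is the metric (nearest-point) projection onto the set `C`. -/
def IsProjOn {H : Type*} [NormedAddCommGroup H] (P : H → H) (C : Set H) : Prop :=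
  ∀ x : H, P x ∈ C ∧ ∀ y ∈ C, ‖x - P x‖ ≤ ‖x - y‖

/-- The distance between two sets: `inf {‖a − b‖ : a ∈ A, b ∈ B}`. -/
noncomputable def setDist {H : Type*} [NormedAddCommGroup H] (A B : Set H) : ℝ :=
  sInf {d : ℝ | ∃ a ∈ A, ∃ b ∈ B, d = ‖a - b‖}

lemma proj_inner_le {H : Type*} [NormedAddCommGroup H] [InnerProductSpace ℝ H]
    {C : Set H} (hC : Convex ℝ C) {P : H → H} (hP : IsProjOn P C) (u : H)
    {w : H} (hw : w ∈ C) : ⟪u - P u, w - P u⟫ ≤ 0 := by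
  have hne : Nonempty C := ⟨⟨P u, (hP u).1⟩⟩
  have hbdd : BddBelow (Set.range fun w : C => ‖u - (w : H)‖) := by
    refine ⟨0, ?_⟩; rintro _ ⟨c, rfl⟩; exact norm_nonneg _
  have hinf : ‖u - P u‖ = ⨅ w : C, ‖u - (w : H)‖ :=
    le_antisymm (le_ciInf fun c => (hP u).2 c c.2) (ciInf_le hbdd ⟨P u, (hP u).1⟩)
  exact (norm_eq_iInf_iff_real_inner_le_zero hC (hP u).1).mp hinf w hw

lemma setDist_le {H : Type*} [NormedAddCommGroup H] {A B : Set H}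
    {a b : H} (ha : a ∈ A) (hb : b ∈ B) : setDist A B ≤ ‖a - b‖ := by
  have hmem : ‖a - b‖ ∈ {d : ℝ | ∃ a ∈ A, ∃ b ∈ B, d = ‖a - b‖} := ⟨a, ha, b, hb, rfl⟩
  have hbdd : BddBelow {d : ℝ | ∃ a ∈ A, ∃ b ∈ B, d = ‖a - b‖} := by
    refine ⟨0, ?_⟩; rintro d ⟨a, _, b, _, rfl⟩; exact norm_nonneg _
  exact csInf_le hbdd hmem

lemma le_setDist {H : Type*} [NormedAddCommGroup H] {A B : Set H}
    (hA : A.Nonempty) (hB : B.Nonempty) {c : ℝ}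
    (h : ∀ a ∈ A, ∀ b ∈ B, c ≤ ‖a - b‖) : c ≤ setDist A B := by
  obtain ⟨a, ha⟩ := hA; obtain ⟨b, hb⟩ := hB
  have hns : Set.Nonempty {d : ℝ | ∃ a ∈ A, ∃ b ∈ B, d = ‖a - b‖} := ⟨‖a - b‖, a, ha, b, hb, rfl⟩
  refine le_csInf hns ?_
  rintro d ⟨a, ha, b, hb, rfl⟩; exact h a ha b hb

/-- Cheney–Goldstein: the fixed points of `P₁ ∘ P₂` are exactly the points of `K₁`
nearest to `K₂`. -/
theorem stmt0 {H : Type*} [NormedAddCommGroup H] [InnerProductSpace ℝ H] [CompleteSpace H]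
    (K₁ K₂ : Set H) (hne₁ : K₁.Nonempty) (hne₂ : K₂.Nonempty)
    (hcl₁ : IsClosed K₁) (hcl₂ : IsClosed K₂)
    (hcv₁ : Convex ℝ K₁) (hcv₂ : Convex ℝ K₂)
    (P₁ P₂ : H → H) (hP₁ : IsProjOn P₁ K₁) (hP₂ : IsProjOn P₂ K₂)
    (x : H) :
    x = P₁ (P₂ x) ↔ x ∈ K₁ ∧ Metric.infDist x K₂ = setDist K₁ K₂ := by
  have hinfd : Metric.infDist x K₂ = ‖x - P₂ x‖ := by
    refine le_antisymm ?_ ?_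
    · simpa [dist_eq_norm] using Metric.infDist_le_dist_of_mem (hP₂ x).1
    · have := hne₂.to_subtype
      rw [Metric.infDist_eq_iInf]
      exact le_ciInf fun b => by simpa [dist_eq_norm] using (hP₂ x).2 b b.2
  constructor
  · intro h
    have hx₁ : x ∈ K₁ := h ▸ (hP₁ (P₂ x)).1
    refine ⟨hx₁, le_antisymm ?_ ?_⟩
    · rw [hinfd]
      refine le_setDist hne₁ hne₂ fun a ha b hb => ?_
      have hA : ⟪P₂ x - x, a - x⟫ ≤ 0 := by
        have := proj_inner_le hcv₁ hP₁ (P₂ x) ha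
        rwa [← h] at this
      have hB : ⟪x - P₂ x, b - P₂ x⟫ ≤ 0 := proj_inner_le hcv₂ hP₂ x hb
      set v := x - P₂ x with hv
      have key : ‖v‖ ^ 2 ≤ ⟪v, a - b⟫ := by
        have e1 : a - b = (a - x) + v + (P₂ x - b) := by rw [hv]; abel
        have e2 : ⟪v, a - x⟫ = -⟪P₂ x - x, a - x⟫ := by
          rw [hv, ← inner_neg_left]; congr 1; abel
        have e3 : ⟪v, P₂ x - b⟫ = -⟪x - P₂ x, b - P₂ x⟫ := by
          rw [← inner_neg_right]; congr 1; abel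
        rw [e1, inner_add_right, inner_add_right, e2, e3,
          real_inner_self_eq_norm_sq]
        linarith
      have hcs := real_inner_le_norm v (a - b)
      nlinarith [norm_nonneg v, norm_nonneg (a - b)]
    · rw [hinfd]
      exact setDist_le hx₁ (hP₂ x).1
  · rintro ⟨hx₁, hd⟩
    set y := P₂ x with hy
    set z := P₁ y with hz
    have hz₁ : z ∈ K₁ := (hP₁ y).1
    have hxy : ‖x - y‖ = setDist K₁ K₂ := by rw [← hd, hinfd]
    have hyz_le : ‖y - z‖ ≤ ‖y - x‖ := (hP₁ y).2 x hx₁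
    have hyx : ‖y - x‖ = setDist K₁ K₂ := by rw [norm_sub_rev]; exact hxy
    have hyz : ‖y - z‖ = setDist K₁ K₂ := by
      refine le_antisymm (hyx ▸ hyz_le) ?_
      rw [norm_sub_rev]; exact setDist_le hz₁ (hP₂ x).1
    set d := setDist K₁ K₂ with hdd
    set m := (1/2 : ℝ) • x + (1/2 : ℝ) • z with hm
    have hm₁ : m ∈ K₁ := hcv₁ hx₁ hz₁ (by norm_num) (by norm_num) (by norm_num)
    have hmin : ‖y - z‖ ≤ ‖y - m‖ := (hP₁ y).2 m hm₁
    have hym : y - m = (1/2 : ℝ) • ((y - x) + (y - z)) := by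
      rw [hm]; module
    have hnorm : ‖y - m‖ = (1/2 : ℝ) * ‖(y - x) + (y - z)‖ := by
      rw [hym, norm_smul]; norm_num
    have hexp : ‖(y - x) + (y - z)‖ ^ 2
        = ‖y - x‖ ^ 2 + 2 * ⟪y - x, y - z⟫ + ‖y - z‖ ^ 2 := by
      rw [norm_add_sq_real]
    have hinner : d ^ 2 ≤ ⟪y - x, y - z⟫ := by
      have h1 : d ≤ ‖y - m‖ := hyz ▸ hmin
      have h2 : (2 * d) ^ 2 ≤ ‖(y - x) + (y - z)‖ ^ 2 := by
        have h3 : 2 * d ≤ ‖(y - x) + (y - z)‖ := by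
          rw [hnorm] at h1; linarith
        nlinarith [norm_nonneg ((y - x) + (y - z)),
          le_trans (le_trans (norm_nonneg _) hyz_le) (le_of_eq hyx)]
      rw [hexp, hyx, hyz] at h2; nlinarith
    have hxz : ‖x - z‖ ^ 2 ≤ 0 := by
      have : x - z = (y - z) - (y - x) := by abel
      rw [this, norm_sub_sq_real, real_inner_comm, hyx, hyz]
      nlinarith
    have : x - z = 0 := by
      have := norm_nonneg (x - z)
      have h0 : ‖x - z‖ = 0 := by nlinarith
      exact norm_eq_zero.mp h0
    exact sub_eq_zero.mp this
end

section
/- Let C₁, …, C_N be nonempty closed convex subsets of a real Hilbert space X with metric projections P₁, …, P_N, and let T := P_N ∘ P_{N−1} ∘ ⋯ ∘ P₁. Then T is asymptotically regular: for every x ∈ X, ‖T^k(x) − T^{k+1}(x)‖ → 0 as k → ∞. -/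
/-!
Each projection `P_i` is firmly nonexpansive, and an induction on `N` shows that the composition
`T` satisfies `N ‖Tx - Ty‖² + ‖(x - Tx) - (y - Ty)‖² ≤ N ‖x - y‖²`. Along two orbits the
distances `‖Tᵏx - Tᵏy‖` decrease, hence converge, so this inequality forces the displacements
`Tᵏx - Tᵏ⁺¹x` and `Tᵏy - Tᵏ⁺¹y` to become asymptotically equal, and the second one is at most
`‖y - Ty‖`. It remains to find points `y` with `‖y - Ty‖` arbitrarily small: since
`‖Tz‖² ≤ ‖z‖² + B` for some constant `B`, the fixed point `y` of the contraction `(1 - μ) T`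
satisfies `‖y - Ty‖² ≤ μ B`.
-/

open Filter

/-- The composition `P_N ∘ P_{N-1} ∘ ⋯ ∘ P₁` (with `0`-based indices: `P 0` is applied
first and `P (N-1)` last). -/
def foldProj {H : Type*} {N : ℕ} (P : Fin N → H → H) : H → H :=
  fun x => (List.ofFn P).foldl (fun y f => f y) x

open Topology RealInnerProductSpace

section FirmlyNonexpansive

variable {E : Type*} [SeminormedAddCommGroup E]

def FirmlyNonexpansive (f : E → E) : Prop :=
  ∀ x y, ‖f x - f y‖ ^ 2 + ‖(x - f x) - (y - f y)‖ ^ 2 ≤ ‖x - y‖ ^ 2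

lemma FirmlyNonexpansive.lipschitzWith_one {f : E → E} (hf : FirmlyNonexpansive f) :
    LipschitzWith 1 f :=
  LipschitzWith.of_dist_le_mul fun x y => by
    have := hf x y
    rw [NNReal.coe_one, one_mul, dist_eq_norm, dist_eq_norm]
    exact le_of_sq_le_sq (by nlinarith [sq_nonneg ‖(x - f x) - (y - f y)‖]) (norm_nonneg _)

end FirmlyNonexpansive

section Projection

variable {H : Type*} [NormedAddCommGroup H] [InnerProductSpace ℝ H] {C : Set H} {P : H → H}

lemma IsProjOn.real_inner_le_zero (hC : Convex ℝ C) (hP : IsProjOn P C) (x : H) {c : H}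
    (hc : c ∈ C) : ⟪x - P x, c - P x⟫ ≤ 0 := by
  have : Nonempty C := ⟨⟨c, hc⟩⟩
  refine (norm_eq_iInf_iff_real_inner_le_zero hC (hP x).1).1 ?_ c hc
  exact le_antisymm (le_ciInf fun w => (hP x).2 w w.2)
    (ciInf_le (f := fun w : C => ‖x - w‖) ⟨0, by rintro _ ⟨w, rfl⟩; positivity⟩ ⟨P x, (hP x).1⟩)

lemma IsProjOn.firmlyNonexpansive (hC : Convex ℝ C) (hP : IsProjOn P C) :
    FirmlyNonexpansive P := by
  intro x y
  have hx := hP.real_inner_le_zero hC x (hP y).1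
  have hy := hP.real_inner_le_zero hC y (hP x).1
  have hcross : 0 ≤ ⟪P x - P y, (x - P x) - (y - P y)⟫ := by
    rw [← neg_sub (P x) (P y), inner_neg_right] at hx
    rw [inner_sub_right, real_inner_comm (x - P x), real_inner_comm (y - P y)]
    linarith
  have hsplit : x - y = (P x - P y) + ((x - P x) - (y - P y)) := by abel
  rw [hsplit, norm_add_sq_real]
  linarith

lemma IsProjOn.norm_sq_le (hC : Convex ℝ C) (hP : IsProjOn P C) {c : H} (hc : c ∈ C) (z : H) :
    ‖P z‖ ^ 2 ≤ ‖z‖ ^ 2 + ‖c‖ ^ 2 := by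
  have hvar := hP.real_inner_le_zero hC z hc
  rw [inner_sub_right] at hvar
  have hz : ‖z‖ ^ 2 = ‖P z‖ ^ 2 + 2 * ⟪P z, z - P z⟫ + ‖z - P z‖ ^ 2 := by
    simpa using norm_add_sq_real (P z) (z - P z)
  -- by the variational inequality, `‖z‖² + ‖c‖² - ‖P z‖² ≥ ‖(z - P z) + c‖²`
  linarith [norm_add_sq_real (z - P z) c, real_inner_comm (P z) (z - P z),
    sq_nonneg ‖(z - P z) + c‖]

end Projection

section Composition

@[simp]
lemma foldProj_zero {α : Type*} (P : Fin 0 → α → α) (x : α) : foldProj P x = x := rfl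

lemma foldProj_succ {α : Type*} {N : ℕ} (P : Fin (N + 1) → α → α) (x : α) :
    foldProj P x = P (Fin.last N) (foldProj (fun i => P i.castSucc) x) := by
  simp only [foldProj, List.ofFn_succ', List.concat_eq_append, List.foldl_append,
    List.foldl_cons, List.foldl_nil]

lemma lipschitzWith_one_foldProj {α : Type*} [PseudoMetricSpace α] {N : ℕ} {P : Fin N → α → α}
    (hP : ∀ i, LipschitzWith 1 (P i)) : LipschitzWith 1 (foldProj P) := by
  induction N with
  | zero => exact LipschitzWith.id
  | succ N ih =>
    have hcomp : foldProj P = P (Fin.last N) ∘ foldProj (fun i => P i.castSucc) :=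
      funext (foldProj_succ P)
    simpa [hcomp] using (hP _).comp (ih fun i => hP i.castSucc)

lemma norm_sq_foldProj_le {E : Type*} [SeminormedAddCommGroup E] {N : ℕ} {P : Fin N → E → E}
    {K : Fin N → ℝ} (hP : ∀ i z, ‖P i z‖ ^ 2 ≤ ‖z‖ ^ 2 + K i) (x : E) :
    ‖foldProj P x‖ ^ 2 ≤ ‖x‖ ^ 2 + ∑ i, K i := by
  induction N with
  | zero => simp
  | succ N ih =>
    rw [foldProj_succ, Fin.sum_univ_castSucc]
    linarith [hP (Fin.last N) (foldProj (fun i => P i.castSucc) x),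
      ih (fun i => hP i.castSucc) (K := fun i => K i.castSucc)]

variable {H : Type*} [NormedAddCommGroup H] [InnerProductSpace ℝ H]

lemma FirmlyNonexpansive.norm_sq_comp_le {f g : H → H} {m : ℝ} (hm : 0 < m)
    (hf : ∀ x y, m * ‖f x - f y‖ ^ 2 + ‖(x - f x) - (y - f y)‖ ^ 2 ≤ m * ‖x - y‖ ^ 2)
    (hg : FirmlyNonexpansive g) (x y : H) :
    (m + 1) * ‖g (f x) - g (f y)‖ ^ 2 + ‖(x - g (f x)) - (y - g (f y))‖ ^ 2
      ≤ (m + 1) * ‖x - y‖ ^ 2 := by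
  set D := (x - f x) - (y - f y)
  set E := (f x - g (f x)) - (f y - g (f y))
  have hDE : (x - g (f x)) - (y - g (f y)) = D + E := by simp only [D, E]; abel
  -- `2 m ⟪D, E⟫ ≤ ‖D‖² + m² ‖E‖²`
  have hYoung : 0 ≤ ‖D - m • E‖ ^ 2 := sq_nonneg _
  rw [norm_sub_sq_real, real_inner_smul_right, norm_smul, Real.norm_of_nonneg hm.le] at hYoung
  have hf' := mul_le_mul_of_nonneg_left (hf x y) (by positivity : (0 : ℝ) ≤ m + 1)
  have hg' := mul_le_mul_of_nonneg_left (hg (f x) (f y)) (by positivity : (0 : ℝ) ≤ m * (m + 1))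
  rw [hDE, norm_add_sq_real, ← mul_le_mul_iff_of_pos_left hm]
  nlinarith

lemma foldProj_averaged {N : ℕ} {P : Fin N → H → H} (hP : ∀ i, FirmlyNonexpansive (P i))
    (x y : H) :
    N * ‖foldProj P x - foldProj P y‖ ^ 2
      + ‖(x - foldProj P x) - (y - foldProj P y)‖ ^ 2 ≤ N * ‖x - y‖ ^ 2 := by
  induction N generalizing x y with
  | zero => simp
  | succ N ih =>
    simp only [foldProj_succ, Nat.cast_succ]
    rcases Nat.eq_zero_or_pos N with rfl | hN
    · simpa using hP (Fin.last 0) x y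
    · exact (hP _).norm_sq_comp_le (Nat.cast_pos.mpr hN) (ih fun i => hP i.castSucc) x y

end Composition

section Displacement

variable {E : Type*} [NormedAddCommGroup E] [NormedSpace ℝ E] {T : E → E}

lemma exists_norm_sub_apply_sq_le [CompleteSpace E] (hT : LipschitzWith 1 T) {B : ℝ}
    (hB : ∀ z, ‖T z‖ ^ 2 ≤ ‖z‖ ^ 2 + B) {μ : ℝ} (hμ0 : 0 < μ) (hμ1 : μ ≤ 1) :
    ∃ y, ‖y - T y‖ ^ 2 ≤ μ * B := by
  have hcontr : ContractingWith ‖1 - μ‖₊ (fun z => (1 - μ) • T z) := by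
    refine ⟨?_, by simpa [Function.comp_def] using (lipschitzWith_smul (1 - μ)).comp hT⟩
    rw [← NNReal.coe_lt_coe, coe_nnnorm, Real.norm_of_nonneg (by linarith)]
    simpa using hμ0
  have : Nonempty E := ⟨0⟩
  set y := ContractingWith.fixedPoint _ hcontr
  have hy : y = (1 - μ) • T y := hcontr.fixedPoint_isFixedPt.symm
  have hy_norm : ‖y‖ = (1 - μ) * ‖T y‖ := by
    nth_rewrite 1 [hy]
    rw [norm_smul, Real.norm_of_nonneg (by linarith)]
  have hy_disp : ‖y - T y‖ = μ * ‖T y‖ := by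
    have : y - T y = (-μ) • T y := by nth_rewrite 1 [hy]; module
    rw [this, norm_smul, norm_neg, Real.norm_of_nonneg hμ0.le]
  refine ⟨y, ?_⟩
  have hBy := hB y
  rw [hy_norm] at hBy
  -- `hBy` says `μ (2 - μ) ‖T y‖² ≤ B`, while `‖y - T y‖² = μ² ‖T y‖²`
  rw [hy_disp]
  nlinarith [sq_nonneg ‖T y‖]

lemma exists_norm_sub_apply_lt [CompleteSpace E] (hT : LipschitzWith 1 T) {B : ℝ}
    (hB : ∀ z, ‖T z‖ ^ 2 ≤ ‖z‖ ^ 2 + B) {ε : ℝ} (hε : 0 < ε) : ∃ y, ‖y - T y‖ < ε := by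
  have hB0 : 0 ≤ B := by simpa using (sq_nonneg ‖T 0‖).trans (hB 0)
  obtain ⟨y, hy⟩ := exists_norm_sub_apply_sq_le hT hB (μ := ε ^ 2 / (B + ε ^ 2))
    (by positivity) (div_le_one_of_le₀ (by linarith) (by positivity))
  refine ⟨y, pow_lt_pow_iff_left₀ (norm_nonneg _) hε.le two_ne_zero |>.1 (hy.trans_lt ?_)⟩
  rw [div_mul_eq_mul_div, div_lt_iff₀ (by positivity)]
  nlinarith [pow_pos hε 4]

end Displacement

section AsymptoticRegularity

variable {E : Type*} [SeminormedAddCommGroup E] {T : E → E}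

lemma LipschitzWith.antitone_dist_iterate (hT : LipschitzWith 1 T) (x y : E) :
    Antitone fun k => dist (T^[k] x) (T^[k] y) :=
  antitone_nat_of_succ_le fun k => by
    simpa [Function.iterate_succ_apply'] using hT.dist_le_mul (T^[k] x) (T^[k] y)

lemma tendsto_norm_sub_iterate_sub_sub_iterate (hT : LipschitzWith 1 T) {n : ℝ}
    (hav : ∀ x y, n * ‖T x - T y‖ ^ 2 + ‖(x - T x) - (y - T y)‖ ^ 2 ≤ n * ‖x - y‖ ^ 2)
    (x y : E) :
    Tendsto (fun k => ‖(T^[k] x - T^[k + 1] x) - (T^[k] y - T^[k + 1] y)‖) atTop (𝓝 0) := by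
  set a : ℕ → ℝ := fun k => dist (T^[k] x) (T^[k] y)
  have ha : Tendsto a atTop (𝓝 (⨅ k, a k)) :=
    tendsto_atTop_ciInf (hT.antitone_dist_iterate x y) ⟨0, by rintro _ ⟨k, rfl⟩; positivity⟩
  have hgap : Tendsto (fun k => n * (a k ^ 2 - a (k + 1) ^ 2)) atTop (𝓝 0) := by
    simpa using ((ha.pow 2).sub ((ha.comp (tendsto_add_atTop_nat 1)).pow 2)).const_mul n
  have hsq : Tendsto (fun k => ‖(T^[k] x - T^[k + 1] x) - (T^[k] y - T^[k + 1] y)‖ ^ 2)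
      atTop (𝓝 0) := by
    refine squeeze_zero (fun _ => by positivity) (fun k => ?_) hgap
    have := hav (T^[k] x) (T^[k] y)
    simp only [a, dist_eq_norm, Function.iterate_succ_apply'] at this ⊢
    linarith
  simpa using hsq.sqrt

theorem tendsto_norm_iterate_sub_iterate_succ (hT : LipschitzWith 1 T) {n : ℝ}
    (hav : ∀ x y, n * ‖T x - T y‖ ^ 2 + ‖(x - T x) - (y - T y)‖ ^ 2 ≤ n * ‖x - y‖ ^ 2)
    (happrox : ∀ ε > 0, ∃ y, ‖y - T y‖ < ε) (x : E) :
    Tendsto (fun k => ‖T^[k] x - T^[k + 1] x‖) atTop (𝓝 0) := by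
  rw [NormedAddGroup.tendsto_nhds_zero]
  intro ε hε
  obtain ⟨y, hy⟩ := happrox (ε / 2) (by positivity)
  filter_upwards [(NormedAddGroup.tendsto_nhds_zero.1
    (tendsto_norm_sub_iterate_sub_sub_iterate hT hav x y)) (ε / 2) (by positivity)] with k hk
  have hy_orbit : ‖T^[k] y - T^[k + 1] y‖ ≤ ‖y - T y‖ := by
    simpa [dist_eq_norm] using hT.dist_iterate_succ_le_geometric y k
  rw [norm_norm] at hk ⊢
  calc ‖T^[k] x - T^[k + 1] x‖
      ≤ ‖T^[k] y - T^[k + 1] y‖ + ‖(T^[k] x - T^[k + 1] x) - (T^[k] y - T^[k + 1] y)‖ :=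
        norm_le_insert' _ _
    _ < ε := by linarith

end AsymptoticRegularity

theorem stmt8_general {H : Type*} [NormedAddCommGroup H] [InnerProductSpace ℝ H] [CompleteSpace H]
    {N : ℕ} (C : Fin N → Set H)
    (hcv : ∀ i, Convex ℝ (C i))
    (P : Fin N → H → H) (hP : ∀ i, IsProjOn (P i) (C i)) :
    ∀ x : H,
      Tendsto (fun k : ℕ => ‖(foldProj P)^[k] x - (foldProj P)^[k + 1] x‖) atTop (nhds 0) := by
  have hfirm i : FirmlyNonexpansive (P i) := (hP i).firmlyNonexpansive (hcv i)
  have hT : LipschitzWith 1 (foldProj P) :=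
    lipschitzWith_one_foldProj fun i => (hfirm i).lipschitzWith_one
  have hB : ∀ z, ‖foldProj P z‖ ^ 2 ≤ ‖z‖ ^ 2 + ∑ i, ‖P i 0‖ ^ 2 :=
    norm_sq_foldProj_le fun i => (hP i).norm_sq_le (hcv i) (hP i 0).1
  exact tendsto_norm_iterate_sub_iterate_succ hT (foldProj_averaged hfirm)
    (fun _ hε => exists_norm_sub_apply_lt hT hB hε)

/-- Bauschke's "zero displacement" theorem: the composition of finitely many metric
projections onto nonempty closed convex sets in a Hilbert space is asymptotically
regular. -/
theorem stmt8 {H : Type*} [NormedAddCommGroup H] [InnerProductSpace ℝ H] [CompleteSpace H]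
    {N : ℕ} (C : Fin N → Set H)
    (hne : ∀ i, (C i).Nonempty) (hcl : ∀ i, IsClosed (C i)) (hcv : ∀ i, Convex ℝ (C i))
    (P : Fin N → H → H) (hP : ∀ i, IsProjOn (P i) (C i)) :
    ∀ x : H,
      Tendsto (fun k : ℕ => ‖(foldProj P)^[k] x - (foldProj P)^[k + 1] x‖) atTop (nhds 0) :=
  stmt8_general C hcv P hP
end

section
/- Let C₁, …, C_N be nonempty closed convex subsets of a real Hilbert space H with projections P₁, …, P_N. For a starting point x⁰ ∈ H, define the cyclic projection orbit by x₁¹ := P₁(x⁰), x_i¹ := P_i(x_{i−1}¹) for i = 2, …, N, and x_iⁿ⁺¹ obtained by continuing cyclically (x₁ⁿ⁺¹ := P₁(x_Nⁿ), x_iⁿ⁺¹ := P_i(x_{i−1}ⁿ⁺¹)). Define the composite operators Q_i as the composition of the N projections starting and ending so that Q_i := P_i ∘ P_{i−1} ∘ ⋯ ∘ P₁ ∘ P_N ∘ ⋯ ∘ P_{i+1}, so that x_iⁿ = Q_i^{n−1}(x_i¹). Then the following dichotomy holds: (i) if every Q_i has no fixed point, then ‖x_iⁿ‖ → ∞ as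 n → ∞ for each i (the orbit has no bounded subsequence); (ii) if every Q_i has a fixed point, then for each i the sequence (x_iⁿ)ₙ converges weakly to some fixed point of Q_i. -/
open Filter

local notation "⟪" x ", " y "⟫" => @inner ℝ _ _ x y

/-- The composite operator `Q_i = P_i ∘ P_{i-1} ∘ ⋯ ∘ P₁ ∘ P_N ∘ ⋯ ∘ P_{i+1}`
(`0`-based: first `P (i+1)` is applied, then `P (i+2)`, …, and `P i` last,
with indices modulo `N`). -/
def cycOp {H : Type*} {N : ℕ} [NeZero N] (P : Fin N → H → H) (i : Fin N) : H → H :=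
  fun x => (List.ofFn fun j : Fin N => P (i + 1 + j)).foldl (fun y f => f y) x

/-!
A metric projection onto a closed convex set is firmly nonexpansive, so each `Q_i`, a composition
of `N` of them, satisfies `‖Q x - Q y‖² + (1/N) ‖(I - Q) x - (I - Q) y‖² ≤ ‖x - y‖²`, and
`n ↦ x_iⁿ` is a `Q_i`-orbit. For such an averaged map the differences
`(I - Q) Qⁿ x - (I - Q) Qⁿ y` tend to `0`, so the orbit is asymptotically regular as soon as
`inf ‖y - Q y‖ = 0`, and then weak limits of its bounded subsequences are fixed points
(demiclosedness of `I - Q`).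

If `Q` has a fixed point, the orbit is Fejér monotone with respect to the fixed point set and
Opial's argument gives weak convergence. If the orbit had a bounded subsequence, `0` would lie in
the closed convex hull of the range of `I - Q` (a separating functional would otherwise grow
linearly along the orbit); testing the monotonicity of `I - Q` against the points
`Q z = (1 + μ) z` then forces `inf ‖y - Q y‖ = 0`, so a weak cluster point of that subsequence
would be a fixed point.
-/

open Topology

section WeakConvergence

variable {H : Type*} [NormedAddCommGroup H] [InnerProductSpace ℝ H]

def TendstoWeakly (a : ℕ → H) (w : H) : Prop :=
  ∀ y, Tendsto (fun k => ⟪a k, y⟫) atTop (𝓝 ⟪w, y⟫)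

/-- Sequential Banach–Alaoglu, applied in the separable closed span of the sequence. -/
theorem exists_strictMono_tendstoWeakly [CompleteSpace H] {a : ℕ → H} {M : ℝ}
    (hM : ∀ n, ‖a n‖ ≤ M) : ∃ w : H, ∃ ψ : ℕ → ℕ, StrictMono ψ ∧ TendstoWeakly (a ∘ ψ) w := by
  set V := (Submodule.span ℝ (Set.range a)).topologicalClosure
  have haV : ∀ n, a n ∈ V :=
    fun n => Submodule.le_topologicalClosure _ (Submodule.subset_span ⟨n, rfl⟩)
  have : TopologicalSpace.SeparableSpace V := by
    have := ((Set.countable_range a).isSeparable.span (R := ℝ)).closure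
    rw [← Submodule.topologicalClosure_coe] at this
    exact this.separableSpace
  let f : ℕ → WeakDual ℝ V :=
    fun n => StrongDual.toWeakDual (InnerProductSpace.toDual ℝ V ⟨a n, haV n⟩)
  have hf : ∀ n, f n ∈ WeakDual.toStrongDual ⁻¹' Metric.closedBall 0 M := fun n => by
    refine (dist_zero_right (E := StrongDual ℝ V) _).trans_le ?_
    exact ((InnerProductSpace.toDual ℝ V).norm_map _).trans_le (hM n)
  obtain ⟨φ, -, ψ, hψ, hφ⟩ := WeakDual.isSeqCompact_closedBall ℝ V 0 M hf
  refine ⟨(InnerProductSpace.toDual ℝ V).symm (WeakDual.toStrongDual φ), ψ, hψ, fun y => ?_⟩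
  have hproj : ∀ v : V, ⟪(v : H), y⟫ = inner ℝ v (V.orthogonalProjectionOnto y) := by
    intro v
    rw [Submodule.coe_inner, ← V.starProjection_apply, ← V.inner_starProjection_left_eq_right,
      V.starProjection_eq_self_iff.2 v.2]
  rw [hproj, InnerProductSpace.toDual_symm_apply]
  have hlim := ((WeakDual.eval_continuous (V.orthogonalProjectionOnto y)).tendsto φ).comp hφ
  exact hlim.congr fun k => (hproj ⟨a (ψ k), haV _⟩).symm

/-- Opial's lemma. -/
theorem exists_mem_tendstoWeakly_of_tendsto_norm_sub [CompleteSpace H] {o : ℕ → H} {F : Set H}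
    {M : ℝ} (hM : ∀ n, ‖o n‖ ≤ M)
    (hF : ∀ φ : ℕ → ℕ, ∀ w, Tendsto φ atTop atTop → TendstoWeakly (o ∘ φ) w → w ∈ F)
    (hdist : ∀ w ∈ F, ∃ r, Tendsto (fun n => ‖o n - w‖) atTop (𝓝 r)) :
    ∃ z ∈ F, TendstoWeakly o z := by
  have huniq : ∀ φ₁ φ₂ : ℕ → ℕ, ∀ w₁ w₂, Tendsto φ₁ atTop atTop → Tendsto φ₂ atTop atTop →
      TendstoWeakly (o ∘ φ₁) w₁ → TendstoWeakly (o ∘ φ₂) w₂ → w₁ = w₂ := by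
    intro φ₁ φ₂ w₁ w₂ hφ₁ hφ₂ h₁ h₂
    obtain ⟨r₁, hr₁⟩ := hdist w₁ (hF φ₁ w₁ hφ₁ h₁)
    obtain ⟨r₂, hr₂⟩ := hdist w₂ (hF φ₂ w₂ hφ₂ h₂)
    have hpolar : ∀ n, ⟪o n, w₁ - w₂⟫ =
        (‖o n - w₂‖ ^ 2 - ‖o n - w₁‖ ^ 2 + ‖w₁‖ ^ 2 - ‖w₂‖ ^ 2) / 2 := by
      intro n
      rw [norm_sub_sq_real, norm_sub_sq_real, inner_sub_right]
      ring
    have hL : Tendsto (fun n => ⟪o n, w₁ - w₂⟫) atTop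
        (𝓝 ((r₂ ^ 2 - r₁ ^ 2 + ‖w₁‖ ^ 2 - ‖w₂‖ ^ 2) / 2)) := by
      simp_rw [hpolar]
      exact ((((hr₂.pow 2).sub (hr₁.pow 2)).add_const _).sub_const _).div_const 2
    have e₁ := tendsto_nhds_unique (hL.comp hφ₁) (h₁ (w₁ - w₂))
    have e₂ := tendsto_nhds_unique (hL.comp hφ₂) (h₂ (w₁ - w₂))
    have : ‖w₁ - w₂‖ ^ 2 = 0 := by
      rw [← real_inner_self_eq_norm_sq, inner_sub_left, ← e₁, ← e₂, sub_self]
    simpa [sub_eq_zero] using this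
  obtain ⟨z, ψ, hψ, hz⟩ := exists_strictMono_tendstoWeakly hM
  refine ⟨z, hF ψ z hψ.tendsto_atTop hz, fun y => tendsto_of_subseq_tendsto fun ns hns => ?_⟩
  obtain ⟨w, θ, hθ, hw⟩ := exists_strictMono_tendstoWeakly fun k => hM (ns k)
  have hwz := huniq _ ψ w z (hns.comp hθ.tendsto_atTop) hψ.tendsto_atTop hw hz
  exact ⟨θ, hwz ▸ hw y⟩

end WeakConvergence

section Displacement

variable {E : Type*} [NormedAddCommGroup E] {Q : E → E}

theorem LipschitzWith.norm_iterate_sub_le (hQ : LipschitzWith 1 Q) (n : ℕ) (x y : E) :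
    ‖Q^[n] x - Q^[n] y‖ ≤ ‖x - y‖ := by
  simpa [dist_eq_norm] using (hQ.iterate n).dist_le_mul x y

theorem LipschitzWith.antitone_norm_iterate_sub (hQ : LipschitzWith 1 Q) {z : E} (hz : Q z = z)
    (x : E) : Antitone fun n => ‖Q^[n] x - z‖ := by
  refine antitone_nat_of_succ_le fun n => ?_
  conv_lhs => rw [Function.iterate_succ_apply', ← hz]
  exact hQ.norm_iterate_sub_le 1 _ _

variable [NormedSpace ℝ E]

/-- A functional separating `0` from the displacements grows linearly along every orbit. -/
theorem tendsto_norm_iterate_atTop_of_zero_notMem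
    (h0 : (0 : E) ∉ closure (convexHull ℝ (Set.range fun y => y - Q y))) (x : E) :
    Tendsto (fun n => ‖Q^[n] x‖) atTop atTop := by
  obtain ⟨f, u, hu, hf⟩ := geometric_hahn_banach_point_closed (convex_convexHull ℝ _).closure
    isClosed_closure h0
  rw [map_zero] at hu
  have hdisp : ∀ y, u < f (y - Q y) :=
    fun y => hf _ (subset_closure (subset_convexHull ℝ _ ⟨y, rfl⟩))
  have hlin : ∀ n : ℕ, n * u ≤ f (x - Q^[n] x) := by
    intro n
    induction n with
    | zero => simp
    | succ n ih =>
      have hsplit : x - Q^[n + 1] x = (x - Q^[n] x) + (Q^[n] x - Q (Q^[n] x)) := by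
        rw [Function.iterate_succ_apply']
        abel
      rw [hsplit, map_add]
      push_cast
      linarith [hdisp (Q^[n] x)]
  have hbound : ∀ n : ℕ, n * u ≤ ‖f‖ * (‖x‖ + ‖Q^[n] x‖) := fun n =>
    (hlin n).trans <| (le_abs_self _).trans <| (f.le_opNorm _).trans
      (mul_le_mul_of_nonneg_left (norm_sub_le _ _) (norm_nonneg f))
  have hf_pos : 0 < ‖f‖ := by
    refine (norm_nonneg f).lt_of_ne fun hf0 => ?_
    have := hbound 1
    rw [← hf0, Nat.cast_one, one_mul, zero_mul] at this
    linarith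
  have hgrow : Tendsto (fun n : ℕ => ‖f‖ * (‖x‖ + ‖Q^[n] x‖)) atTop atTop :=
    tendsto_atTop_mono hbound (tendsto_natCast_atTop_atTop.atTop_mul_const hu)
  rw [tendsto_const_mul_atTop_of_pos hf_pos] at hgrow
  simpa using tendsto_atTop_add_const_left _ (-‖x‖) hgrow

theorem LipschitzWith.exists_map_eq_smul [CompleteSpace E] (hQ : LipschitzWith 1 Q) {μ : ℝ}
    (hμ : 0 < μ) : ∃ z, Q z = (1 + μ) • z := by
  set c : ℝ := (1 + μ)⁻¹
  have hc0 : 0 ≤ c := by positivity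
  have hc1 : c < 1 := inv_lt_one_of_one_lt₀ (by linarith)
  have hT : ContractingWith ⟨c, hc0⟩ fun z => c • Q z := by
    refine ⟨by exact_mod_cast hc1, LipschitzWith.of_dist_le_mul fun z z' => ?_⟩
    rw [dist_smul₀, Real.norm_of_nonneg hc0]
    exact mul_le_mul_of_nonneg_left (by simpa using hQ.dist_le_mul z z') hc0
  set z := ContractingWith.fixedPoint _ hT
  have hfix : c • Q z = z := ContractingWith.fixedPoint_isFixedPt (hf := hT)
  refine ⟨z, ?_⟩
  calc Q z = (1 + μ) • c • Q z := by rw [smul_smul, mul_inv_cancel₀ (by positivity), one_smul]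
    _ = (1 + μ) • z := by rw [hfix]

end Displacement

section Nonexpansive

variable {H : Type*} [NormedAddCommGroup H] [InnerProductSpace ℝ H] {Q : H → H}

theorem LipschitzWith.inner_sub_sub_nonneg (hQ : LipschitzWith 1 Q) (x y : H) :
    0 ≤ ⟪x - y, (x - Q x) - (y - Q y)⟫ := by
  have hQxy : ‖Q x - Q y‖ ≤ ‖x - y‖ := hQ.norm_iterate_sub_le 1 x y
  have hCS : ⟪x - y, Q x - Q y⟫ ≤ ‖x - y‖ * ‖Q x - Q y‖ := real_inner_le_norm _ _
  rw [show (x - Q x) - (y - Q y) = (x - y) - (Q x - Q y) by abel, inner_sub_right,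
    real_inner_self_eq_norm_sq]
  nlinarith [norm_nonneg (x - y)]

/-- Monotonicity of `I - Q` tested against the resolvent points `Q z = (1 + μ) • z`; the bound is
affine in the displacement `w`, hence survives convex combinations. -/
theorem LipschitzWith.exists_resolvent_bound (hQ : LipschitzWith 1 Q) {w : H}
    (hw : w ∈ convexHull ℝ (Set.range fun y => y - Q y)) :
    ∃ (b : H) (c : ℝ), ∀ (μ : ℝ) (z : H), Q z = (1 + μ) • z →
      μ * ‖z‖ ^ 2 + ⟪z, w⟫ ≤ μ * ⟪b, z⟫ + c := by
  suffices convexHull ℝ (Set.range fun y => y - Q y) ⊆ {w | ∃ (b : H) (c : ℝ), ∀ (μ : ℝ) (z : H),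
      Q z = (1 + μ) • z → μ * ‖z‖ ^ 2 + ⟪z, w⟫ ≤ μ * ⟪b, z⟫ + c} from this hw
  refine convexHull_min ?_ ?_
  · rintro _ ⟨y, rfl⟩
    refine ⟨y, ⟪y, y - Q y⟫, fun μ z hz => ?_⟩
    have hmono := hQ.inner_sub_sub_nonneg z y
    rw [show z - Q z = -(μ • z) by rw [hz]; module] at hmono
    simp only [inner_sub_left, inner_sub_right, inner_neg_right, real_inner_smul_right,
      real_inner_self_eq_norm_sq, real_inner_comm y z] at hmono ⊢
    linarith
  · rintro w₁ ⟨b₁, c₁, h₁⟩ w₂ ⟨b₂, c₂, h₂⟩ s t hs ht hst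
    refine ⟨s • b₁ + t • b₂, s * c₁ + t * c₂, fun μ z hz => ?_⟩
    have e₁ := mul_le_mul_of_nonneg_left (h₁ μ z hz) hs
    have e₂ := mul_le_mul_of_nonneg_left (h₂ μ z hz) ht
    simp only [inner_add_left, inner_add_right, real_inner_smul_left, real_inner_smul_right]
    linear_combination e₁ + e₂ - (μ * ‖z‖ ^ 2) * hst

theorem LipschitzWith.exists_norm_sub_le_of_zero_mem [CompleteSpace H] (hQ : LipschitzWith 1 Q)
    (h0 : (0 : H) ∈ closure (convexHull ℝ (Set.range fun y => y - Q y))) {ε : ℝ} (hε : 0 < ε) :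
    ∃ y, ‖y - Q y‖ ≤ ε := by
  set δ := ε / 3
  have hδ : 0 < δ := by positivity
  obtain ⟨w, hw, hwδ⟩ : ∃ w ∈ convexHull ℝ (Set.range fun y => y - Q y), ‖w‖ < δ := by
    obtain ⟨w, hw, hd⟩ := Metric.mem_closure_iff.1 h0 δ hδ
    exact ⟨w, hw, by rwa [dist_comm, dist_zero_right] at hd⟩
  obtain ⟨b, c, hbc⟩ := hQ.exists_resolvent_bound hw
  set μ := min (δ / (‖b‖ + 1)) (δ ^ 2 / (|c| + 1))
  have hμ : 0 < μ := by positivity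
  have hμb : μ * ‖b‖ ≤ δ := by
    have : μ * (‖b‖ + 1) ≤ δ := (le_div_iff₀ (by positivity)).1 (min_le_left _ _)
    nlinarith
  have hμc : μ * c ≤ δ ^ 2 := by
    have : μ * (|c| + 1) ≤ δ ^ 2 := (le_div_iff₀ (by positivity)).1 (min_le_right _ _)
    nlinarith [le_abs_self c]
  obtain ⟨z, hz⟩ := hQ.exists_map_eq_smul hμ
  have hdisp : ‖z - Q z‖ = μ * ‖z‖ := by
    rw [hz, show z - (1 + μ) • z = -(μ • z) by module, norm_neg, norm_smul,
      Real.norm_of_nonneg hμ.le]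
  -- with `r = μ ‖z‖`, the bound reads `r² ≤ r (μ ‖b‖ + ‖w‖) + μ c ≤ 2 δ r + δ²`
  have hbound := hbc μ z hz
  have hb : ⟪b, z⟫ ≤ ‖b‖ * ‖z‖ := real_inner_le_norm _ _
  have hw' : -⟪z, w⟫ ≤ ‖z‖ * ‖w‖ := by
    have := abs_real_inner_le_norm z w
    linarith [neg_abs_le ⟪z, w⟫]
  refine ⟨z, ?_⟩
  rw [hdisp]
  have hr : (μ * ‖z‖) ^ 2 ≤ 2 * δ * (μ * ‖z‖) + δ ^ 2 := by
    have hz0 := norm_nonneg z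
    nlinarith [mul_le_mul_of_nonneg_left hbound hμ.le, mul_le_mul_of_nonneg_left hb hμ.le,
      mul_le_mul_of_nonneg_left hw' hμ.le, mul_le_mul_of_nonneg_right hμb hz0,
      mul_le_mul_of_nonneg_left hwδ.le (mul_nonneg hμ.le hz0)]
  by_contra! hlt
  have hε3 : ε = 3 * δ := by ring
  nlinarith [mul_pos (sub_pos.2 (hε3 ▸ hlt)) (add_pos hδ hδ)]

/-- Demiclosedness of `I - Q` at `0`. -/
theorem LipschitzWith.map_eq_of_tendstoWeakly (hQ : LipschitzWith 1 Q) {a : ℕ → H} {w : H}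
    {M : ℝ} (hM : ∀ k, ‖a k‖ ≤ M) (hw : TendstoWeakly a w)
    (hreg : Tendsto (fun k => a k - Q (a k)) atTop (𝓝 0)) : Q w = w := by
  set d : ℕ → ℝ := fun k => ‖a k - Q (a k)‖
  have hd : Tendsto d atTop (𝓝 0) := by simpa using hreg.norm
  have hineq : ∀ k, ‖w - Q w‖ ^ 2 ≤ d k ^ 2 + 2 * (M + ‖w‖) * d k - 2 * ⟪a k - w, w - Q w⟫ := by
    intro k
    have h₁ : ‖a k - Q w‖ ≤ d k + ‖a k - w‖ := by
      rw [← sub_add_sub_cancel (a k) (Q (a k)) (Q w)]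
      exact (norm_add_le _ _).trans (add_le_add le_rfl (hQ.norm_iterate_sub_le 1 _ _))
    have h₂ : ‖a k - Q w‖ ^ 2 = ‖a k - w‖ ^ 2 + 2 * ⟪a k - w, w - Q w⟫ + ‖w - Q w‖ ^ 2 := by
      rw [← norm_add_sq_real, sub_add_sub_cancel]
    have h₃ : ‖a k - w‖ ≤ M + ‖w‖ := (_root_.norm_sub_le _ _).trans (by linarith [hM k])
    nlinarith [pow_le_pow_left₀ (norm_nonneg _) h₁ 2,
      mul_le_mul_of_nonneg_left h₃ (norm_nonneg (a k - Q (a k)))]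
  have hinner : Tendsto (fun k => ⟪a k - w, w - Q w⟫) atTop (𝓝 0) := by
    simpa [inner_sub_left] using (hw (w - Q w)).sub_const ⟪w, w - Q w⟫
  have hlim : Tendsto (fun k => d k ^ 2 + 2 * (M + ‖w‖) * d k - 2 * ⟪a k - w, w - Q w⟫) atTop
      (𝓝 0) := by
    simpa using ((hd.pow 2).add (hd.const_mul (2 * (M + ‖w‖)))).sub (hinner.const_mul 2)
  have hsq : ‖w - Q w‖ ^ 2 ≤ 0 := ge_of_tendsto' hlim hineq
  exact (sub_eq_zero.1 (norm_eq_zero.1 (by nlinarith [norm_nonneg (w - Q w)]))).symm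

end Nonexpansive

section Averaged

/-- `Q` is `1/(1+β)`-averaged; `β = 1` is firm nonexpansiveness. -/
def IsAveraged {E : Type*} [NormedAddCommGroup E] (β : ℝ) (Q : E → E) : Prop :=
  ∀ x y, ‖Q x - Q y‖ ^ 2 + β * ‖(x - Q x) - (y - Q y)‖ ^ 2 ≤ ‖x - y‖ ^ 2

theorem mul_div_add_mul_norm_add_sq_le {E : Type*} [SeminormedAddCommGroup E] {a b : ℝ}
    (ha : 0 < a) (hb : 0 < b) (A B : E) :
    a * b / (a + b) * ‖A + B‖ ^ 2 ≤ a * ‖A‖ ^ 2 + b * ‖B‖ ^ 2 := by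
  have hAB : ‖A + B‖ ^ 2 ≤ (‖A‖ + ‖B‖) ^ 2 := pow_le_pow_left₀ (norm_nonneg _) (norm_add_le A B) 2
  rw [div_mul_eq_mul_div, div_le_iff₀ (by positivity)]
  nlinarith [sq_nonneg (a * ‖A‖ - b * ‖B‖), mul_le_mul_of_nonneg_left hAB (mul_pos ha hb).le]

variable {E : Type*} [NormedAddCommGroup E] {Q : E → E} {β : ℝ}

theorem IsAveraged.comp {F G : E → E} {a b : ℝ} (hG : IsAveraged b G) (hF : IsAveraged a F)
    (ha : 0 < a) (hb : 0 < b) : IsAveraged (a * b / (a + b)) (G ∘ F) := by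
  intro x y
  have e : (x - G (F x)) - (y - G (F y)) =
      ((x - F x) - (y - F y)) + ((F x - G (F x)) - (F y - G (F y))) := by abel
  simp only [Function.comp_apply, e]
  linarith [hF x y, hG (F x) (F y), mul_div_add_mul_norm_add_sq_le ha hb
    ((x - F x) - (y - F y)) ((F x - G (F x)) - (F y - G (F y)))]

theorem isAveraged_foldl (l : List (E → E)) (hl : ∀ f ∈ l, IsAveraged 1 f) {g : E → E}
    (hg : IsAveraged 1 g) :
    IsAveraged (1 / (l.length + 1)) fun x => l.foldl (fun y f => f y) (g x) := by
  induction l generalizing g with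
  | nil => simpa using hg
  | cons f l ih =>
    have hrest := ih (fun h hh => hl h (List.mem_cons_of_mem f hh)) (hl f List.mem_cons_self)
    have e : (1 : ℝ) / ((f :: l).length + 1) =
        1 * (1 / (l.length + 1)) / (1 + 1 / (l.length + 1)) := by
      simp only [List.length_cons, Nat.cast_add, Nat.cast_one]
      field_simp
    rw [e]
    exact hrest.comp hg one_pos (by positivity)

theorem IsAveraged.lipschitzWith (hQ : IsAveraged β Q) (hβ : 0 ≤ β) : LipschitzWith 1 Q := by
  refine LipschitzWith.of_dist_le_mul fun x y => ?_
  rw [NNReal.coe_one, one_mul, dist_eq_norm, dist_eq_norm, ← sq_le_sq₀ (norm_nonneg _)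
    (norm_nonneg _)]
  nlinarith [hQ x y, sq_nonneg ‖(x - Q x) - (y - Q y)‖]

theorem IsAveraged.tendsto_sub_sub_iterate (hQ : IsAveraged β Q) (hβ : 0 < β) (x y : E) :
    Tendsto (fun n => (Q^[n] x - Q (Q^[n] x)) - (Q^[n] y - Q (Q^[n] y))) atTop (𝓝 0) := by
  set D := fun n => (Q^[n] x - Q (Q^[n] x)) - (Q^[n] y - Q (Q^[n] y))
  set s : ℕ → ℝ := fun n => ‖Q^[n] x - Q^[n] y‖ ^ 2
  have hstep : ∀ n, s (n + 1) + β * ‖D n‖ ^ 2 ≤ s n := fun n => by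
    simpa only [s, D, Function.iterate_succ_apply'] using hQ (Q^[n] x) (Q^[n] y)
  have hanti : Antitone s :=
    antitone_nat_of_succ_le fun n => by nlinarith [hstep n, sq_nonneg ‖D n‖]
  have hs : Tendsto s atTop (𝓝 (⨅ n, s n)) :=
    tendsto_atTop_ciInf hanti ⟨0, Set.forall_mem_range.2 fun n => sq_nonneg _⟩
  have hgap : Tendsto (fun n => (s n - s (n + 1)) / β) atTop (𝓝 0) := by
    simpa using (hs.sub (hs.comp (tendsto_add_atTop_nat 1))).div_const β
  have hsq : Tendsto (fun n => ‖D n‖ ^ 2) atTop (𝓝 0) :=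
    squeeze_zero (fun n => sq_nonneg _)
      (fun n => (le_div_iff₀ hβ).2 (by linarith [hstep n])) hgap
  rw [tendsto_zero_iff_norm_tendsto_zero]
  simpa [Real.sqrt_sq (norm_nonneg _)] using hsq.sqrt

theorem IsAveraged.tendsto_iterate_sub_map (hQ : IsAveraged β Q) (hβ : 0 < β)
    (hsmall : ∀ ε > 0, ∃ y, ‖y - Q y‖ ≤ ε) (x : E) :
    Tendsto (fun n => Q^[n] x - Q (Q^[n] x)) atTop (𝓝 0) := by
  refine Metric.tendsto_nhds.2 fun ε hε => ?_
  obtain ⟨y, hy⟩ := hsmall (ε / 2) (half_pos hε)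
  filter_upwards [Metric.tendsto_nhds.1 (hQ.tendsto_sub_sub_iterate hβ x y) (ε / 2) (half_pos hε)]
    with n hn
  rw [dist_zero_right] at hn ⊢
  have hyn : ‖Q^[n] y - Q (Q^[n] y)‖ ≤ ‖y - Q y‖ := by
    rw [← Function.iterate_succ_apply' Q n y, Function.iterate_succ_apply]
    exact (hQ.lipschitzWith hβ.le).norm_iterate_sub_le n y (Q y)
  linarith [norm_sub_norm_le (Q^[n] x - Q (Q^[n] x)) (Q^[n] y - Q (Q^[n] y))]

end Averaged

section Projection

variable {H : Type*} [NormedAddCommGroup H] [InnerProductSpace ℝ H] {P : H → H} {C : Set H}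

theorem IsProjOn.inner_sub_le_zero (hP : IsProjOn P C) (hC : Convex ℝ C) (x : H) {w : H}
    (hw : w ∈ C) : ⟪x - P x, w - P x⟫ ≤ 0 := by
  have : Nonempty C := ⟨⟨w, hw⟩⟩
  have hmin : ‖x - P x‖ = ⨅ w : C, ‖x - w‖ :=
    le_antisymm (le_ciInf fun w => (hP x).2 w w.2)
      (ciInf_le (f := fun w : C => ‖x - w‖) ⟨0, Set.forall_mem_range.2 fun _ => norm_nonneg _⟩
        ⟨P x, (hP x).1⟩)
  exact (norm_eq_iInf_iff_real_inner_le_zero hC (hP x).1).1 hmin w hw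

theorem IsProjOn.isAveraged_one (hP : IsProjOn P C) (hC : Convex ℝ C) : IsAveraged 1 P := by
  intro x y
  have h₁ := hP.inner_sub_le_zero hC x (hP y).1
  have h₂ := hP.inner_sub_le_zero hC y (hP x).1
  have hfirm : 0 ≤ ⟪(x - y) - (P x - P y), P x - P y⟫ := by
    have e₁ : (x - y) - (P x - P y) = (x - P x) - (y - P y) := by abel
    have e₂ : P y - P x = -(P x - P y) := by abel
    rw [e₂, inner_neg_right] at h₁
    rw [e₁, inner_sub_left]
    linarith
  rw [show (x - P x) - (y - P y) = (x - y) - (P x - P y) by abel, norm_sub_sq_real (x - y)]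
  rw [inner_sub_left, real_inner_self_eq_norm_sq] at hfirm
  linarith

end Projection

section Hilbert

variable {H : Type*} [NormedAddCommGroup H] [InnerProductSpace ℝ H] [CompleteSpace H]
  {Q : H → H} {β : ℝ}

theorem IsAveraged.tendsto_norm_iterate_atTop (hQ : IsAveraged β Q) (hβ : 0 < β)
    (hfix : ¬∃ z, Q z = z) (x : H) : Tendsto (fun n => ‖Q^[n] x‖) atTop atTop := by
  by_contra hx
  have hQ₁ := hQ.lipschitzWith hβ.le
  have h0 : (0 : H) ∈ closure (convexHull ℝ (Set.range fun y => y - Q y)) :=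
    not_not.1 fun h0 => hx (tendsto_norm_iterate_atTop_of_zero_notMem h0 x)
  have hreg := hQ.tendsto_iterate_sub_map hβ
    (fun ε hε => hQ₁.exists_norm_sub_le_of_zero_mem h0 hε) x
  simp only [tendsto_atTop, not_forall, not_eventually, not_le] at hx
  obtain ⟨M, hM⟩ := hx
  obtain ⟨φ, hφ, hφM⟩ := extraction_of_frequently_atTop hM
  obtain ⟨w, ψ, hψ, hw⟩ := exists_strictMono_tendstoWeakly fun k => (hφM k).le
  exact hfix ⟨w, hQ₁.map_eq_of_tendstoWeakly (fun k => (hφM (ψ k)).le) hw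
    (hreg.comp (hφ.comp hψ).tendsto_atTop)⟩

theorem IsAveraged.exists_tendstoWeakly_iterate (hQ : IsAveraged β Q) (hβ : 0 < β)
    (hfix : ∃ z, Q z = z) (x : H) : ∃ z, Q z = z ∧ TendstoWeakly (fun n => Q^[n] x) z := by
  obtain ⟨z₀, hz₀⟩ := hfix
  have hQ₁ := hQ.lipschitzWith hβ.le
  have hM : ∀ n, ‖Q^[n] x‖ ≤ ‖x - z₀‖ + ‖z₀‖ := fun n => by
    have := hQ₁.antitone_norm_iterate_sub hz₀ x (Nat.zero_le n)
    linarith [norm_sub_norm_le (Q^[n] x) z₀, show ‖Q^[0] x - z₀‖ = ‖x - z₀‖ from rfl]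
  have hreg := hQ.tendsto_iterate_sub_map hβ (fun ε hε => ⟨z₀, by simpa [hz₀] using hε.le⟩) x
  exact exists_mem_tendstoWeakly_of_tendsto_norm_sub (F := {z | Q z = z}) hM
    (fun φ w hφ hw => hQ₁.map_eq_of_tendstoWeakly (fun k => hM _) hw (hreg.comp hφ))
    (fun w hw => ⟨_, tendsto_atTop_ciInf (hQ₁.antitone_norm_iterate_sub hw x)
      ⟨0, Set.forall_mem_range.2 fun n => norm_nonneg _⟩⟩)

end Hilbert

section CyclicProjections

open scoped Fin.NatCast

variable {H : Type*} {N : ℕ} [NeZero N]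

theorem isAveraged_cycOp [NormedAddCommGroup H] {P : Fin N → H → H}
    (hP : ∀ i, IsAveraged 1 (P i)) (i : Fin N) : IsAveraged (1 / N) (cycOp P i) := by
  obtain ⟨n, rfl⟩ := Nat.exists_eq_succ_of_ne_zero (NeZero.ne N)
  have := isAveraged_foldl (List.ofFn fun j : Fin n => P (i + 1 + j.succ))
    (by simp [List.mem_ofFn, hP]) (hP (i + 1 + 0))
  convert this using 1
  · simp
  · funext x
    simp [cycOp, List.ofFn_succ]

theorem orbit_add_eq_foldl (P : Fin N → H → H) {u : ℕ → H}
    (hu : ∀ k : ℕ, u (k + 1) = P k (u k)) (m j : ℕ) :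
    u (m + j) =
      (List.ofFn fun t : Fin j => P ((m + t : ℕ) : Fin N)).foldl (fun y f => f y) (u m) := by
  induction j with
  | zero => simp
  | succ j ih =>
    rw [List.ofFn_succ', List.concat_eq_append, List.foldl_append, ← add_assoc, hu, ih]
    simp

theorem orbit_eq_iterate_cycOp (P : Fin N → H → H) {u : ℕ → H}
    (hu : ∀ k : ℕ, u (k + 1) = P k (u k)) (i : Fin N) (n : ℕ) :
    u (n * N + i + 1) = (cycOp P i)^[n] (u (i + 1)) := by
  induction n with
  | zero => simp
  | succ n ih =>
    rw [Function.iterate_succ_apply', ← ih, show (n + 1) * N + i + 1 = n * N + i + 1 + N by ring,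
      orbit_add_eq_foldl P hu]
    congr
    funext t
    congr 1
    simp

end CyclicProjections

/-- With `0`-based indices, `u (n * N + i + 1)` is the point `x_{i+1}^{n+1}` of the cyclic
projection orbit. -/
theorem stmt9_general {H : Type*} [NormedAddCommGroup H] [InnerProductSpace ℝ H] [CompleteSpace H]
    {N : ℕ} [NeZero N]
    (C : Fin N → Set H)
    (hcv : ∀ i, Convex ℝ (C i))
    (P : Fin N → H → H) (hP : ∀ i, IsProjOn (P i) (C i))
    (u : ℕ → H)
    (hu : ∀ k : ℕ, u (k + 1) =
      P ⟨k % N, Nat.mod_lt k (Nat.pos_of_ne_zero (NeZero.ne N))⟩ (u k)) :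
    ((∀ i : Fin N, ¬ ∃ z : H, cycOp P i z = z) →
      ∀ i : Fin N, Tendsto (fun n : ℕ => ‖u (n * N + (i : ℕ) + 1)‖) atTop atTop) ∧
    ((∀ i : Fin N, ∃ z : H, cycOp P i z = z) →
      ∀ i : Fin N, ∃ z : H, cycOp P i z = z ∧
        ∀ y : H, Tendsto (fun n : ℕ => ⟪u (n * N + (i : ℕ) + 1), y⟫) atTop (nhds ⟪z, y⟫)) := by
  have hQ : ∀ i, IsAveraged (1 / N) (cycOp P i) :=
    isAveraged_cycOp fun i => (hP i).isAveraged_one (hcv i)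
  have hβ : (0 : ℝ) < 1 / N := by simp [NeZero.pos N]
  have horbit := orbit_eq_iterate_cycOp P hu
  refine ⟨fun hfix i => ?_, fun hfix i => ?_⟩
  · simpa only [horbit] using (hQ i).tendsto_norm_iterate_atTop hβ (hfix i) (u (i + 1))
  · simp only [horbit]
    exact (hQ i).exists_tendstoWeakly_iterate hβ (hfix i) (u (i + 1))

/-- Bauschke–Borwein–Lewis dichotomy for the method of cyclic projections: if every
composite operator `Q_i` is fixed-point free then the orbit is unbounded (`‖x_iⁿ‖ → ∞`
for each `i`); if every `Q_i` has a fixed point, then each subsequence `(x_iⁿ)ₙ`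
converges weakly to a fixed point of `Q_i`.  Here `u (k+1) = P_{k mod N} (u k)` and
`x_iⁿ` corresponds to `u (n·N + i + 1)` with `0`-based `i`. -/
theorem stmt9 {H : Type*} [NormedAddCommGroup H] [InnerProductSpace ℝ H] [CompleteSpace H]
    {N : ℕ} [NeZero N]
    (C : Fin N → Set H) (hne : ∀ i, (C i).Nonempty) (hcl : ∀ i, IsClosed (C i))
    (hcv : ∀ i, Convex ℝ (C i))
    (P : Fin N → H → H) (hP : ∀ i, IsProjOn (P i) (C i))
    (x0 : H) (u : ℕ → H) (hu0 : u 0 = x0)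
    (hu : ∀ k : ℕ, u (k + 1) =
      P ⟨k % N, Nat.mod_lt k (Nat.pos_of_ne_zero (NeZero.ne N))⟩ (u k)) :
    ((∀ i : Fin N, ¬ ∃ z : H, cycOp P i z = z) →
      ∀ i : Fin N, Tendsto (fun n : ℕ => ‖u (n * N + (i : ℕ) + 1)‖) atTop atTop) ∧
    ((∀ i : Fin N, ∃ z : H, cycOp P i z = z) →
      ∀ i : Fin N, ∃ z : H, cycOp P i z = z ∧
        ∀ y : H, Tendsto (fun n : ℕ => ⟪u (n * N + (i : ℕ) + 1), y⟫) atTop (nhds ⟪z, y⟫)) :=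
  stmt9_general C hcv P hP u hu
end

section
/- Let C₁, …, C_N be closed affine subspaces of a real Hilbert space H with projections P₁, …, P_N, and define the cyclic projection orbit from a starting point x⁰ by x₁¹ := P₁(x⁰), x_i¹ := P_i(x_{i−1}¹), x₁ⁿ⁺¹ := P₁(x_Nⁿ), x_iⁿ⁺¹ := P_i(x_{i−1}ⁿ⁺¹), and the composite operators Q_i := P_i ∘ P_{i−1} ∘ ⋯ ∘ P₁ ∘ P_N ∘ ⋯ ∘ P_{i+1}, so that x_iⁿ = Q_i^{n−1}(x_i¹). Suppose each Q_i has a fixed point. Then for each i the sequence (x_iⁿ)ₙ converges in norm to the fixed point of Q_i nearest to x⁰, i.e. to the projection of x⁰ onto the fixed point set Fix Q_i. -/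
/-!
Each projection `Pₖ` onto an affine subspace `V` is a translate of the orthogonal projection
onto the direction of `V`, so `Qᵢ` is affine, `Qᵢ x - Qᵢ y = T (x - y)`, with `T` a product of
`N` orthogonal projections. Such a `T` satisfies `‖v - T v‖² ≤ N (‖v‖² - ‖T v‖²)`, which makes
the iterates `Tⁿ v` Cauchy; with a fixed point `z₀` of `Qᵢ`, `Qᵢⁿ x - z₀ = Tⁿ (x - z₀)` converges
to a fixed point `z`. If `w` is another fixed point, then `T (z - w) = z - w`, which forces
`z - w` into every direction space; all displacements `x - Pₖ x` are orthogonal to it, hence so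
is `z - x⁰`, and Pythagoras gives `‖x⁰ - z‖ ≤ ‖x⁰ - w‖`.
-/

open Filter

open Topology RealInnerProductSpace

section

variable {H : Type*} [NormedAddCommGroup H]

/-- For linear `T` this says that `T` is `c / (1 + c)`-averaged. -/
def DisplacementBound (c : ℝ) (T : H → H) : Prop :=
  ∀ v, ‖v - T v‖ ^ 2 ≤ c * (‖v‖ ^ 2 - ‖T v‖ ^ 2)

theorem add_sq_le_mul_add_of_sq_le {a b c d X Y : ℝ} (hc : 0 ≤ c)
    (hd : 0 ≤ d) (hX : 0 ≤ X) (hY : 0 ≤ Y) (haX : a ^ 2 ≤ c * X) (hbY : b ^ 2 ≤ d * Y) :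
    (a + b) ^ 2 ≤ (c + d) * (X + Y) := by
  have hab : 2 * (a * b) ≤ d * X + c * Y := by
    nlinarith [mul_le_mul haX hbY (sq_nonneg b) (by positivity), sq_nonneg (d * X - c * Y),
      mul_nonneg hd hX, mul_nonneg hc hY]
  nlinarith

namespace DisplacementBound

variable {c d : ℝ} {S T : H → H}

theorem norm_map_le (hc : 0 ≤ c) (hT : DisplacementBound c T) (v : H) : ‖T v‖ ≤ ‖v‖ := by
  by_contra! h
  have hpos : 0 < ‖v - T v‖ := (sub_pos.2 h).trans_le (norm_sub_rev v (T v) ▸ norm_sub_norm_le _ _)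
  nlinarith [hT v, mul_nonneg hc (by nlinarith [norm_nonneg v] : 0 ≤ ‖T v‖ ^ 2 - ‖v‖ ^ 2)]

theorem map_eq_self_of_norm_map_eq (hT : DisplacementBound c T) {v : H} (h : ‖T v‖ = ‖v‖) :
    T v = v := by
  have h0 : ‖v - T v‖ ^ 2 ≤ 0 := by simpa only [h, sub_self, mul_zero] using hT v
  have : ‖v - T v‖ = 0 := by nlinarith [norm_nonneg (v - T v)]
  exact (sub_eq_zero.1 (norm_eq_zero.1 this)).symm

theorem comp (hc : 0 ≤ c) (hd : 0 ≤ d) (hS : DisplacementBound c S)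
    (hT : DisplacementBound d T) : DisplacementBound (c + d) (T ∘ S) := by
  intro v
  have htri : ‖v - T (S v)‖ ≤ ‖v - S v‖ + ‖S v - T (S v)‖ :=
    norm_sub_le_norm_sub_add_norm_sub _ _ _
  have hX := hS.norm_map_le hc v
  have hY := hT.norm_map_le hd (S v)
  calc ‖v - T (S v)‖ ^ 2 ≤ (‖v - S v‖ + ‖S v - T (S v)‖) ^ 2 := by gcongr
    _ ≤ (c + d) * ((‖v‖ ^ 2 - ‖S v‖ ^ 2) + (‖S v‖ ^ 2 - ‖T (S v)‖ ^ 2)) :=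
      add_sq_le_mul_add_of_sq_le hc hd
        (by nlinarith [norm_nonneg (S v)]) (by nlinarith [norm_nonneg (T (S v))]) (hS v) (hT (S v))
    _ = (c + d) * (‖v‖ ^ 2 - ‖(T ∘ S) v‖ ^ 2) := by simp only [Function.comp_apply]; ring

theorem map_eq_self_of_comp_eq (hc : 0 ≤ c) (hd : 0 ≤ d) (hS : DisplacementBound c S)
    (hT : DisplacementBound d T) {v : H} (h : T (S v) = v) : S v = v ∧ T v = v := by
  have hSv : S v = v := hS.map_eq_self_of_norm_map_eq <| le_antisymm (hS.norm_map_le hc v)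
    (by simpa only [h] using hT.norm_map_le hd (S v))
  exact ⟨hSv, by rwa [hSv] at h⟩

theorem iterate (hc : 0 ≤ c) (hT : DisplacementBound c T) (n : ℕ) :
    DisplacementBound (n * c) T^[n] := by
  induction n with
  | zero => intro v; simp
  | succ n ih =>
    rw [Function.iterate_succ, Nat.cast_succ, add_one_mul, add_comm]
    exact hT.comp hc (by positivity) ih

end DisplacementBound

section LinearPart

variable [NormedSpace ℝ H]

def HasLinearPart (f : H → H) (T : H →L[ℝ] H) : Prop :=
  ∀ x y, f x - f y = T (x - y)

theorem HasLinearPart.comp {f g : H → H} {S T : H →L[ℝ] H} (hf : HasLinearPart f S)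
    (hg : HasLinearPart g T) : HasLinearPart (g ∘ f) (T.comp S) := fun x y => by
  simp only [Function.comp_apply, ContinuousLinearMap.comp_apply, hg (f x), hf x y]

theorem HasLinearPart.iterate_sub {Q : H → H} {T : H →L[ℝ] H} (hQ : HasLinearPart Q T) {z : H}
    (hz : Q z = z) (x : H) (n : ℕ) : Q^[n] x - z = T^[n] (x - z) := by
  induction n with
  | zero => rfl
  | succ n ih =>
    rw [Function.iterate_succ_apply', Function.iterate_succ_apply', ← ih, ← hQ, hz]

theorem exists_hasLinearPart_foldl {c : ℝ} (hc : 0 ≤ c) (fs : List (H → H))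
    (hfs : ∀ f ∈ fs, ∃ T : H →L[ℝ] H, HasLinearPart f T ∧ DisplacementBound c T) :
    ∃ T : H →L[ℝ] H, HasLinearPart (fun x => fs.foldl (fun y f => f y) x) T ∧
      DisplacementBound (fs.length * c) T ∧
      ∀ v, T v = v → ∀ f ∈ fs, ∀ x, f (x + v) = f x + v := by
  induction fs with
  | nil => exact ⟨.id ℝ H, fun _ _ => rfl, fun v => by simp, by simp⟩
  | cons f fs ih =>
    obtain ⟨S, hfS, hS⟩ := hfs f List.mem_cons_self
    obtain ⟨T, hT, hTc, hTfix⟩ := ih fun g hg => hfs g (List.mem_cons_of_mem f hg)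
    refine ⟨T.comp S, hfS.comp hT, ?_, fun v hv => ?_⟩
    · rw [List.length_cons, Nat.cast_succ, add_one_mul, add_comm]
      exact hS.comp (T := T) hc (by positivity) hTc
    · obtain ⟨hSv, hTv⟩ := hS.map_eq_self_of_comp_eq hc (by positivity) hTc hv
      refine List.forall_mem_cons.2 ⟨fun x => ?_, hTfix v hTv⟩
      rw [← sub_eq_iff_eq_add', hfS, add_sub_cancel_left, hSv]

end LinearPart

section InnerProductSpace

variable [InnerProductSpace ℝ H]

/-- The iterates `Tⁿ v` converge: `‖Tⁿ v‖` decreases to some `A`, and since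
`‖Tⁿ v + Tⁿ⁺ᵏ v‖ = ‖Tⁿ (v + Tᵏ v)‖` also decreases, to `2A`, the parallelogram law gives
`‖Tⁿ v - Tⁿ⁺ᵏ v‖² ≤ 4 (‖Tⁿ v‖² - A²)` uniformly in `k`. -/
theorem DisplacementBound.cauchySeq_iterate {c : ℝ} {T : H →L[ℝ] H} (hc : 0 ≤ c)
    (hT : DisplacementBound c T) (v : H) : CauchySeq fun n => T^[n] v := by
  set g : ℕ → H := fun n => T^[n] v
  have hg_add (n k : ℕ) : g (n + k) = T^[k] (g n) := by
    simp only [g, add_comm n k, Function.iterate_add_apply]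
  have ha_anti : Antitone fun n => ‖g n‖ := antitone_nat_of_succ_le fun n => by
    simpa only [hg_add n 1, Function.iterate_one] using hT.norm_map_le hc (g n)
  have ha_bdd : BddBelow (Set.range fun n => ‖g n‖) := ⟨0, by rintro _ ⟨n, rfl⟩; positivity⟩
  set A := ⨅ n, ‖g n‖
  have hA_sq : Tendsto (fun n => ‖g n‖ ^ 2) atTop (𝓝 (A ^ 2)) :=
    (tendsto_atTop_ciInf ha_anti ha_bdd).pow 2
  have hsum_ge (n k : ℕ) : (2 * A) ^ 2 ≤ ‖g n + g (n + k)‖ ^ 2 := by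
    have hdiff : Tendsto (fun m => ‖g m - g (m + k)‖ ^ 2) atTop (𝓝 0) := by
      refine squeeze_zero (fun _ => by positivity) (fun m => ?_)
        (by simpa using (hA_sq.sub (hA_sq.comp (tendsto_add_atTop_nat k))).const_mul (k * c))
      simpa only [hg_add m k] using hT.iterate hc k (g m)
    have hsum : Tendsto (fun m => ‖g m + g (m + k)‖ ^ 2) atTop (𝓝 ((2 * A) ^ 2)) := by
      have := ((hA_sq.add (hA_sq.comp (tendsto_add_atTop_nat k))).const_mul 2).sub hdiff
      rw [show (2 * A) ^ 2 = 2 * (A ^ 2 + A ^ 2) - 0 by ring]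
      refine this.congr fun m => ?_
      simp only [Function.comp_apply]
      linarith [parallelogram_law_with_norm ℝ (g m) (g (m + k))]
    refine le_of_tendsto hsum (eventually_atTop.2 ⟨n, fun m hm => ?_⟩)
    obtain ⟨j, rfl⟩ := Nat.exists_eq_add_of_le hm
    have : g (n + j) + g (n + j + k) = T^[j] (g n + g (n + k)) := by
      rw [iterate_map_add, ← hg_add, ← hg_add, add_right_comm]
    rw [this]
    gcongr
    exact (hT.iterate hc j).norm_map_le (by positivity) _
  have hbound (n k : ℕ) : ‖g (n + k) - g n‖ ^ 2 ≤ 4 * (‖g n‖ ^ 2 - A ^ 2) := by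
    rw [norm_sub_rev]
    nlinarith [parallelogram_law_with_norm ℝ (g n) (g (n + k)), hsum_ge n k,
      pow_le_pow_left₀ (norm_nonneg _) (ha_anti (Nat.le_add_right n k)) 2]
  refine Metric.cauchySeq_iff'.2 fun ε hε => ?_
  have hε' : A ^ 2 < A ^ 2 + ε ^ 2 / 4 := lt_add_of_pos_right _ (by positivity)
  obtain ⟨N, hN⟩ := (hA_sq.eventually (gt_mem_nhds hε')).exists_forall_of_atTop
  refine ⟨N, fun n hn => ?_⟩
  obtain ⟨k, rfl⟩ := Nat.exists_eq_add_of_le hn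
  rw [dist_eq_norm]
  exact lt_of_pow_lt_pow_left₀ 2 hε.le (by nlinarith [hbound N k, hN N le_rfl])

theorem HasLinearPart.exists_tendsto_iterate [CompleteSpace H] {c : ℝ} {Q : H → H}
    {T : H →L[ℝ] H} (hQ : HasLinearPart Q T) (hc : 0 ≤ c) (hT : DisplacementBound c T) {z₀ : H}
    (hz₀ : Q z₀ = z₀) (x : H) : ∃ z, Q z = z ∧ Tendsto (fun n => Q^[n] x) atTop (𝓝 z) := by
  obtain ⟨y, hy⟩ := cauchySeq_tendsto_of_complete (hT.cauchySeq_iterate hc (x - z₀))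
  have hlim : Tendsto (fun n => Q^[n] x) atTop (𝓝 (y + z₀)) := by
    simpa only [← hQ.iterate_sub hz₀, sub_add_cancel] using hy.add_const z₀
  have hQ_cont : Continuous Q := by
    have : Q = fun x => T (x - z₀) + z₀ := funext fun x => by rw [← hQ, hz₀, sub_add_cancel]
    rw [this]; fun_prop
  refine ⟨y + z₀, tendsto_nhds_unique ?_ (hlim.comp (tendsto_add_atTop_nat 1)), hlim⟩
  simpa only [Function.comp_def, Function.iterate_succ_apply'] using
    (hQ_cont.tendsto _).comp hlim

theorem Submodule.displacementBound_starProjection (K : Submodule ℝ H)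
    [K.HasOrthogonalProjection] : DisplacementBound 1 K.starProjection := by
  intro v
  have h := norm_add_sq_eq_norm_sq_add_norm_sq_real
    (K.starProjection_inner_eq_zero v _ (K.starProjection_apply_mem v))
  rw [sub_add_cancel] at h
  rw [one_mul, sq, sq, sq]
  linarith

namespace IsProjOn

variable {P : H → H} {V : AffineSubspace ℝ H}

theorem sub_mem_orthogonal (hP : IsProjOn P V) (x : H) : x - P x ∈ V.directionᗮ := by
  have hPx : P x ∈ V := (hP x).1
  have : Nonempty V := ⟨⟨P x, hPx⟩⟩
  have hmin : ‖x - P x‖ = ⨅ w : V, ‖x - w‖ :=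
    le_antisymm (le_ciInf fun w => (hP x).2 w w.2)
      (ciInf_le (f := fun w : V => ‖x - w‖) ⟨0, by rintro _ ⟨w, rfl⟩; positivity⟩ ⟨P x, hPx⟩)
  have hle := (norm_eq_iInf_iff_real_inner_le_zero V.convex hPx).1 hmin
  refine (Submodule.mem_orthogonal' _ _).2 fun d hd => ?_
  have h₁ := hle _ (AffineSubspace.vadd_mem_of_mem_direction hd hPx)
  have h₂ := hle _ (AffineSubspace.vadd_mem_of_mem_direction (neg_mem hd) hPx)
  simp only [vadd_eq_add, add_sub_cancel_right, inner_neg_right] at h₁ h₂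
  linarith

theorem sub_mem_direction (hP : IsProjOn P V) (x y : H) : P x - P y ∈ V.direction :=
  AffineSubspace.vsub_mem_direction (hP x).1 (hP y).1

theorem sub_sub_mem_orthogonal (hP : IsProjOn P V) (x y : H) :
    x - y - (P x - P y) ∈ V.directionᗮ := by
  rw [sub_sub_sub_comm]
  exact sub_mem (hP.sub_mem_orthogonal x) (hP.sub_mem_orthogonal y)

theorem hasOrthogonalProjection (hP : IsProjOn P V) : V.direction.HasOrthogonalProjection :=
  ⟨fun v => ⟨P v - P 0, hP.sub_mem_direction v 0, by
    simpa only [sub_zero] using hP.sub_sub_mem_orthogonal v 0⟩⟩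

theorem hasLinearPart_starProjection (hP : IsProjOn P V) [V.direction.HasOrthogonalProjection] :
    HasLinearPart P V.direction.starProjection := fun x y =>
  (Submodule.eq_starProjection_of_mem_orthogonal (hP.sub_mem_direction x y)
    (hP.sub_sub_mem_orthogonal x y)).symm

theorem exists_hasLinearPart (hP : IsProjOn P V) :
    ∃ T : H →L[ℝ] H, HasLinearPart P T ∧ DisplacementBound 1 T :=
  have := hP.hasOrthogonalProjection
  ⟨_, hP.hasLinearPart_starProjection, V.direction.displacementBound_starProjection⟩

theorem inner_sub_eq_zero_of_map_add (hP : IsProjOn P V) {v y : H} (hv : P (y + v) = P y + v)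
    (x : H) : ⟪x - P x, v⟫ = 0 := by
  have hvV : v ∈ V.direction := by
    simpa only [hv, add_sub_cancel_left] using hP.sub_mem_direction (y + v) y
  exact (Submodule.mem_orthogonal' _ _).1 (hP.sub_mem_orthogonal x) v hvV

end IsProjOn

theorem inner_orbit_sub_eq_zero {u : ℕ → H} {f : ℕ → H → H} {v : H}
    (hu : ∀ k, u (k + 1) = f k (u k)) (hf : ∀ k x, ⟪x - f k x, v⟫ = 0) (m : ℕ) :
    ⟪u m - u 0, v⟫ = 0 := by
  induction m with
  | zero => simp
  | succ m ih =>
    rw [hu, show f m (u m) - u 0 = (u m - u 0) - (u m - f m (u m)) by abel, inner_sub_left, ih, hf,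
      sub_zero]

theorem norm_sub_le_norm_sub_of_inner_eq_zero {x z w : H} (h : ⟪z - x, z - w⟫ = 0) :
    ‖x - z‖ ≤ ‖x - w‖ := by
  have hpyth := norm_add_sq_eq_norm_sq_add_norm_sq_real
    (by rwa [← neg_sub, inner_neg_left, neg_eq_zero] : ⟪x - z, z - w⟫ = 0)
  rw [sub_add_sub_cancel] at hpyth
  exact (mul_self_le_mul_self_iff (norm_nonneg _) (norm_nonneg _)).2
    (by nlinarith [mul_self_nonneg ‖z - w‖])

end InnerProductSpace

end

theorem eq_foldl_ofFn_of_succ {α : Type*} {u : ℕ → α} {f : ℕ → α → α}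
    (hu : ∀ k, u (k + 1) = f k (u k)) (s m : ℕ) :
    u (s + m) = (List.ofFn fun t : Fin m => f (s + t)).foldl (fun y g => g y) (u s) := by
  induction m with
  | zero => rfl
  | succ m ih =>
    rw [List.ofFn_succ', List.concat_eq_append, List.foldl_append]
    simp only [Fin.val_castSucc, Fin.val_last, ← ih, List.foldl_cons, List.foldl_nil]
    rw [← add_assoc, hu]

theorem eq_iterate_cycOp {α : Type*} {N : ℕ} [NeZero N] {P : Fin N → α → α} {u : ℕ → α}
    (hu : ∀ k, u (k + 1) = P (Fin.ofNat N k) (u k)) (i : Fin N) (n : ℕ) :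
    u (n * N + i + 1) = (cycOp P i)^[n] (u (i + 1)) := by
  induction n with
  | zero => simp
  | succ n ih =>
    rw [Function.iterate_succ_apply', ← ih, show (n + 1) * N + i + 1 = n * N + i + 1 + N by ring,
      eq_foldl_ofFn_of_succ hu]
    unfold cycOp
    congr! with t
    ext
    simp [Fin.val_add, Nat.add_mod]

/-- `x_iⁿ` is `u (n * N + i + 1)`, with `0`-based indices. -/
theorem stmt10 {H : Type*} [NormedAddCommGroup H] [InnerProductSpace ℝ H] [CompleteSpace H]
    {N : ℕ} [NeZero N]
    (C : Fin N → Set H)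
    (haff : ∀ i, ∃ V : AffineSubspace ℝ H,
      (V : Set H).Nonempty ∧ IsClosed (V : Set H) ∧ C i = (V : Set H))
    (P : Fin N → H → H) (hP : ∀ i, IsProjOn (P i) (C i))
    (x0 : H) (u : ℕ → H) (hu0 : u 0 = x0)
    (hu : ∀ k : ℕ, u (k + 1) =
      P ⟨k % N, Nat.mod_lt k (Nat.pos_of_ne_zero (NeZero.ne N))⟩ (u k))
    (hfix : ∀ i : Fin N, ∃ z : H, cycOp P i z = z) :
    ∀ i : Fin N, ∃ z : H, cycOp P i z = z ∧
      (∀ w : H, cycOp P i w = w → ‖x0 - z‖ ≤ ‖x0 - w‖) ∧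
      Tendsto (fun n : ℕ => u (n * N + (i : ℕ) + 1)) atTop (nhds z) := by
  intro i
  have hV (k : Fin N) : ∃ V : AffineSubspace ℝ H, IsProjOn (P k) V :=
    let ⟨V, _, _, hCV⟩ := haff k
    ⟨V, hCV ▸ hP k⟩
  choose V hV using hV
  obtain ⟨T, hQ, hT, hTfix⟩ := exists_hasLinearPart_foldl zero_le_one
    (List.ofFn fun j => P (i + 1 + j))
    (List.forall_mem_ofFn_iff.2 fun j => (hV _).exists_hasLinearPart)
  obtain ⟨z₀, hz₀⟩ := hfix i
  replace hQ : HasLinearPart (cycOp P i) T := hQ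
  obtain ⟨z, hz, hlim⟩ := hQ.exists_tendsto_iterate (by positivity) hT hz₀ (u (i + 1))
  rw [← funext (eq_iterate_cycOp hu i)] at hlim
  refine ⟨z, hz, fun w hw => ?_, hlim⟩
  have hTv : T (z - w) = z - w := by rw [← hQ]; exact congrArg₂ _ hz hw
  have horth (k : Fin N) (x : H) : ⟪x - P k x, z - w⟫ = 0 :=
    (hV k).inner_sub_eq_zero_of_map_add
      (hTfix _ hTv (P k) (List.mem_ofFn.2 ⟨k - (i + 1), by simp⟩) 0) x
  have hx0 : ⟪z - x0, z - w⟫ = 0 := by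
    have hclosed : IsClosed {y : H | ⟪y - x0, z - w⟫ = 0} :=
      isClosed_eq (by fun_prop) continuous_const
    refine hclosed.mem_of_tendsto hlim (Eventually.of_forall fun n => ?_)
    rw [← hu0]
    exact inner_orbit_sub_eq_zero hu (fun k => horth _) _
  exact norm_sub_le_norm_sub_of_inner_eq_zero hx0
end

section
/- Let C₁, …, C_m be nonempty closed convex subsets of the Euclidean space ℝⁿ with projections P₁, …, P_m. Let I₁, …, I_S be strings, i.e. finite nonempty ordered tuples I_t = (i₁ᵗ, …, i_{γ(I_t)}ᵗ) of indices from {1, …, m}, and define the string operators T_t := P_{i_{γ(I_t)}ᵗ} ∘ ⋯ ∘ P_{i₂ᵗ} ∘ P_{i₁ᵗ}. Let ω ∈ ℝ^S be a positive weight vector with ω_t > 0 and Σ_t ω_t = 1, and define the string-averaging operator T := Σ_{t=1}^S ω_t·T_t. If for at least one starting point x⁰ ∈ ℝⁿ the sequence generated by x^{k+1} = T(x^k) is bounded, then this sequence converges for every starting point x⁰ ∈ ℝⁿ. -/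
/-!
Projections onto closed convex sets are firmly nonexpansive: they satisfy
`‖T x - T y‖² + c ‖(x - T x) - (y - T y)‖² ≤ ‖x - y‖²` with `c = 1`. This inequality survives
composition (with a smaller `c > 0`) and convex combinations, so the string-averaging operator
satisfies it for some `c > 0`; in particular it is nonexpansive.

A nonexpansive map with a bounded orbit has a fixed point: the asymptotic centre of the orbit,
i.e. the minimiser of `x ↦ limsup ‖x_k - x‖`. It is unique because the square of this function is
uniformly convex, and `T` does not increase the function, so `T` fixes it.

Given a fixed point `z`, every orbit is Fejér monotone with respect to `z`, and the inequality with
`y = z` makes the squared steps `‖x_k - T x_k‖²` summable. A subsequence converges by compactness;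
its limit is a fixed point, and Fejér monotonicity with respect to that limit makes the whole orbit
converge to it.
-/

open Filter

/-- Projection along a string `I = (i₁, …, i_γ)`: the composition
`P_{i_γ} ∘ ⋯ ∘ P_{i₂} ∘ P_{i₁}` (the head of the list is applied first). -/
def strOp {E : Type*} {m : ℕ} (P : Fin m → E → E) (I : List (Fin m)) : E → E :=
  fun x => I.foldl (fun y i => P i y) x

/-- The string-averaging operator `T = Σ_t ω_t · T_t`. -/
noncomputable def strAvg {E : Type*} [AddCommMonoid E] [Module ℝ E] {m S : ℕ}
    (P : Fin m → E → E) (I : Fin S → List (Fin m)) (ω : Fin S → ℝ) : E → E :=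
  fun x => ∑ t, ω t • strOp P (I t) x

open Bornology Function Metric Set Topology

section StronglyNonexpansive

variable {E : Type*} [NormedAddCommGroup E]

/-- `c = 1` is firm nonexpansiveness; for `c > 0` these are the `1 / (1 + c)`-averaged maps. -/
def StronglyNonexpansive (c : ℝ) (T : E → E) : Prop :=
  ∀ x y, ‖T x - T y‖ ^ 2 + c * ‖(x - T x) - (y - T y)‖ ^ 2 ≤ ‖x - y‖ ^ 2

lemma norm_sum_smul_sq_le [NormedSpace ℝ E] {ι : Type*} {s : Finset ι} {ω : ι → ℝ}
    (hω : ∀ t ∈ s, 0 ≤ ω t) (hω1 : ∑ t ∈ s, ω t = 1) (v : ι → E) :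
    ‖∑ t ∈ s, ω t • v t‖ ^ 2 ≤ ∑ t ∈ s, ω t * ‖v t‖ ^ 2 :=
  ((convexOn_norm convex_univ).pow (fun _ _ => norm_nonneg _) 2).map_sum_le hω hω1
    (fun _ _ => Set.mem_univ _)

namespace StronglyNonexpansive

variable {c c₁ c₂ : ℝ} {T T₁ T₂ : E → E}

lemma mono (h : StronglyNonexpansive c T) {c' : ℝ} (hc' : c' ≤ c) :
    StronglyNonexpansive c' T := fun x y => by
  nlinarith [h x y, sq_nonneg ‖(x - T x) - (y - T y)‖]

lemma lipschitzWith (h : StronglyNonexpansive c T) (hc : 0 ≤ c) : LipschitzWith 1 T := by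
  refine LipschitzWith.mk_one fun x y => ?_
  rw [dist_eq_norm, dist_eq_norm]
  refine le_of_sq_le_sq ?_ (norm_nonneg _)
  nlinarith [h x y, sq_nonneg ‖(x - T x) - (y - T y)‖]

lemma id : StronglyNonexpansive c (id : E → E) := fun x y => by simp

lemma comp (h₁ : StronglyNonexpansive c₁ T₁) (h₂ : StronglyNonexpansive c₂ T₂)
    (hc₁ : 0 < c₁) (hc₂ : 0 < c₂) :
    StronglyNonexpansive (c₁ * c₂ / (c₁ + c₂)) (T₂ ∘ T₁) := by
  intro x y
  set a := (x - T₁ x) - (y - T₁ y)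
  set b := (T₁ x - T₂ (T₁ x)) - (T₁ y - T₂ (T₁ y))
  have hab : (x - T₂ (T₁ x)) - (y - T₂ (T₁ y)) = a + b := by simp only [a, b]; abel
  -- Cauchy–Schwarz: `‖a + b‖² ≤ (1/c₁ + 1/c₂) (c₁‖a‖² + c₂‖b‖²)`
  have key : c₁ * c₂ / (c₁ + c₂) * ‖a + b‖ ^ 2 ≤ c₁ * ‖a‖ ^ 2 + c₂ * ‖b‖ ^ 2 := by
    rw [div_mul_eq_mul_div, div_le_iff₀ (by positivity)]
    nlinarith [sq_nonneg (c₁ * ‖a‖ - c₂ * ‖b‖), norm_nonneg a, norm_nonneg b,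
      norm_nonneg (a + b), mul_pos hc₁ hc₂,
      mul_self_le_mul_self (norm_nonneg (a + b)) (norm_add_le a b)]
  simp only [Function.comp_apply, hab]
  linarith [h₁ x y, h₂ (T₁ x) (T₁ y)]

lemma sum_smul [NormedSpace ℝ E] {ι : Type*} {s : Finset ι} {T : ι → E → E}
    (hT : ∀ t ∈ s, StronglyNonexpansive c (T t)) (hc : 0 ≤ c) {ω : ι → ℝ}
    (hω : ∀ t ∈ s, 0 ≤ ω t) (hω1 : ∑ t ∈ s, ω t = 1) :
    StronglyNonexpansive c (fun x => ∑ t ∈ s, ω t • T t x) := by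
  intro x y
  have hdiff : (∑ t ∈ s, ω t • T t x) - ∑ t ∈ s, ω t • T t y
      = ∑ t ∈ s, ω t • (T t x - T t y) := by
    simp only [smul_sub, Finset.sum_sub_distrib]
  have hdisp : (x - ∑ t ∈ s, ω t • T t x) - (y - ∑ t ∈ s, ω t • T t y)
      = ∑ t ∈ s, ω t • ((x - T t x) - (y - T t y)) := by
    simp only [smul_sub, Finset.sum_sub_distrib, ← Finset.sum_smul, hω1, one_smul]
  have hsum : ∑ t ∈ s, ω t * (‖T t x - T t y‖ ^ 2 + c * ‖(x - T t x) - (y - T t y)‖ ^ 2)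
      ≤ ‖x - y‖ ^ 2 := calc
    _ ≤ ∑ t ∈ s, ω t * ‖x - y‖ ^ 2 :=
      Finset.sum_le_sum fun t ht => mul_le_mul_of_nonneg_left (hT t ht x y) (hω t ht)
    _ = ‖x - y‖ ^ 2 := by rw [← Finset.sum_mul, hω1, one_mul]
  rw [hdiff, hdisp]
  have h₁ := norm_sum_smul_sq_le hω hω1 fun t => T t x - T t y
  have h₂ := norm_sum_smul_sq_le hω hω1 fun t => (x - T t x) - (y - T t y)
  simp only [mul_add, Finset.sum_add_distrib, mul_left_comm _ c, ← Finset.mul_sum] at hsum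
  nlinarith [mul_le_mul_of_nonneg_left h₂ hc]

end StronglyNonexpansive

lemma stronglyNonexpansive_strOp {m : ℕ} {P : Fin m → E → E}
    (hP : ∀ i, StronglyNonexpansive 1 (P i)) (l : List (Fin m)) :
    StronglyNonexpansive ((l.length : ℝ) + 1)⁻¹ (strOp P l) := by
  induction l with
  | nil => exact StronglyNonexpansive.id
  | cons i l ih =>
    have h := (hP i).comp ih one_pos (by positivity)
    have hc : 1 * ((l.length : ℝ) + 1)⁻¹ / (1 + ((l.length : ℝ) + 1)⁻¹)
        = (((i :: l).length : ℝ) + 1)⁻¹ := by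
      push_cast [List.length_cons]
      field_simp
    exact hc ▸ h

lemma exists_pos_stronglyNonexpansive_strAvg [NormedSpace ℝ E] {m S : ℕ} {P : Fin m → E → E}
    (hP : ∀ i, StronglyNonexpansive 1 (P i)) (I : Fin S → List (Fin m)) {ω : Fin S → ℝ}
    (hω : ∀ t, 0 ≤ ω t) (hω1 : ∑ t, ω t = 1) :
    ∃ c > 0, StronglyNonexpansive c (strAvg P I ω) := by
  set γ := Finset.univ.sup fun t => (I t).length
  refine ⟨((γ : ℝ) + 1)⁻¹, by positivity, StronglyNonexpansive.sum_smul (fun t _ => ?_)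
    (by positivity) (fun t _ => hω t) hω1⟩
  refine (stronglyNonexpansive_strOp hP (I t)).mono ?_
  gcongr
  exact Finset.le_sup (f := fun t => (I t).length) (Finset.mem_univ t)

lemma IsProjOn.inner_sub_nonpos [InnerProductSpace ℝ E] {P : E → E} {C : Set E}
    (hP : IsProjOn P C) (hC : Convex ℝ C) (x : E) {w : E} (hw : w ∈ C) :
    inner ℝ (x - P x) (w - P x) ≤ 0 := by
  have : Nonempty C := ⟨⟨P x, (hP x).1⟩⟩
  refine (norm_eq_iInf_iff_real_inner_le_zero hC (hP x).1).mp ?_ w hw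
  refine le_antisymm (le_ciInf fun w => (hP x).2 w w.2) ?_
  exact ciInf_le ⟨0, by rintro _ ⟨w, rfl⟩; exact norm_nonneg _⟩ (⟨P x, (hP x).1⟩ : C)

lemma IsProjOn.stronglyNonexpansive [InnerProductSpace ℝ E] {P : E → E} {C : Set E}
    (hP : IsProjOn P C) (hC : Convex ℝ C) : StronglyNonexpansive 1 P := by
  intro x y
  have hx := hP.inner_sub_nonpos hC x (hP y).1
  have hy := hP.inner_sub_nonpos hC y (hP x).1
  -- sum of the two variational inequalities
  have key : ‖P x - P y‖ ^ 2 ≤ inner ℝ (x - y) (P x - P y) := by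
    have e : x - y = (x - P x) - (y - P y) + (P x - P y) := by abel
    rw [e, inner_add_left, real_inner_self_eq_norm_sq, inner_sub_left]
    rw [← neg_sub (P x) (P y), inner_neg_right] at hx
    linarith [real_inner_comm (y - P y) (P x - P y)]
  have e : (x - P x) - (y - P y) = (x - y) - (P x - P y) := by abel
  rw [e, norm_sub_sq_real (x - y) (P x - P y)]
  linarith

end StronglyNonexpansive

section AsymptoticRadius

variable {X : Type*} [PseudoMetricSpace X] {y : ℕ → X}

noncomputable def asymptoticRadius (y : ℕ → X) (x : X) : ℝ :=
  limsup (fun k => dist (y k) x) atTop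

lemma isBoundedUnder_dist_of_isBounded_range (hy : IsBounded (range y)) (x : X) :
    IsBoundedUnder (· ≤ ·) atTop fun k => dist (y k) x := by
  obtain ⟨r, hr⟩ := hy.subset_closedBall x
  exact isBoundedUnder_of ⟨r, fun k => hr ⟨k, rfl⟩⟩

lemma asymptoticRadius_nonneg (hy : IsBounded (range y)) (x : X) : 0 ≤ asymptoticRadius y x :=
  le_limsup_of_frequently_le (Frequently.of_forall fun _ => dist_nonneg)
    (isBoundedUnder_dist_of_isBounded_range hy x)

lemma asymptoticRadius_le_of_eventually {x : X} {b : ℝ} (h : ∀ᶠ k in atTop, dist (y k) x ≤ b) :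
    asymptoticRadius y x ≤ b :=
  limsup_le_of_le (isCoboundedUnder_le_of_le atTop fun _ => dist_nonneg) h

lemma asymptoticRadius_sq_le_of_eventually (hy : IsBounded (range y)) {x : X} {b : ℝ}
    (h : ∀ᶠ k in atTop, dist (y k) x ^ 2 ≤ b) : asymptoticRadius y x ^ 2 ≤ b := by
  obtain ⟨k, hk⟩ := h.exists
  have hb : 0 ≤ b := (sq_nonneg _).trans hk
  refine (Real.le_sqrt (asymptoticRadius_nonneg hy x) hb).1 (asymptoticRadius_le_of_eventually ?_)
  exact h.mono fun k hk => (Real.le_sqrt dist_nonneg hb).2 hk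

lemma eventually_dist_lt_asymptoticRadius_add (hy : IsBounded (range y)) (x : X) {ε : ℝ}
    (hε : 0 < ε) : ∀ᶠ k in atTop, dist (y k) x < asymptoticRadius y x + ε :=
  eventually_lt_of_limsup_lt (lt_add_of_pos_right _ hε)
    (isBoundedUnder_dist_of_isBounded_range hy x)

lemma lipschitzWith_asymptoticRadius (hy : IsBounded (range y)) :
    LipschitzWith 1 (asymptoticRadius y) := by
  refine LipschitzWith.of_le_add fun u v => le_of_forall_pos_le_add fun ε hε => ?_
  refine asymptoticRadius_le_of_eventually ?_
  filter_upwards [eventually_dist_lt_asymptoticRadius_add hy v hε] with k hk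
  linarith [dist_triangle (y k) v u, dist_comm u v]

lemma exists_forall_asymptoticRadius_le [ProperSpace X]
    (hy : IsBounded (range y)) : ∃ z, ∀ x, asymptoticRadius y z ≤ asymptoticRadius y x := by
  obtain ⟨r, hr⟩ := hy.subset_closedBall (y 0)
  refine (lipschitzWith_asymptoticRadius hy).continuous.exists_forall_le' (y 0) ?_
  filter_upwards [(isCompact_closedBall (y 0) (r + asymptoticRadius y (y 0))).compl_mem_cocompact]
    with x hx
  have hfar : r + asymptoticRadius y (y 0) < dist x (y 0) := by simpa using hx
  refine le_trans ?_ (le_limsup_of_frequently_le (Frequently.of_forall fun k => ?_)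
    (isBoundedUnder_dist_of_isBounded_range hy x) : dist x (y 0) - r ≤ _)
  · linarith
  · linarith [dist_triangle x (y k) (y 0), dist_comm x (y k), mem_closedBall.1 (hr ⟨k, rfl⟩)]

lemma asymptoticRadius_iterate_apply_le {T : X → X} (hT : LipschitzWith 1 T) {x₀ : X}
    (hb : IsBounded (range fun k => T^[k] x₀)) (x : X) :
    asymptoticRadius (fun k => T^[k] x₀) (T x) ≤ asymptoticRadius (fun k => T^[k] x₀) x := by
  rw [asymptoticRadius, ← limsup_nat_add _ 1]
  refine limsup_le_limsup (Eventually.of_forall fun k => ?_)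
    (isCoboundedUnder_le_of_le atTop fun _ => dist_nonneg)
    (isBoundedUnder_dist_of_isBounded_range hb x)
  simpa [iterate_succ_apply'] using hT.dist_le_mul (T^[k] x₀) x

end AsymptoticRadius

section FixedPoint

variable {E : Type*} [NormedAddCommGroup E] [InnerProductSpace ℝ E] {y : ℕ → E}

lemma asymptoticRadius_midpoint_sq_le (hy : IsBounded (range y)) (u v : E) :
    asymptoticRadius y (midpoint ℝ u v) ^ 2
      ≤ (asymptoticRadius y u ^ 2 + asymptoticRadius y v ^ 2) / 2 - (dist u v / 2) ^ 2 := by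
  set g : ℝ → ℝ := fun ε =>
    ((asymptoticRadius y u + ε) ^ 2 + (asymptoticRadius y v + ε) ^ 2) / 2 - (dist u v / 2) ^ 2
  have hg : Tendsto g (𝓝[>] 0) (𝓝 (g 0)) :=
    ((by fun_prop : Continuous g).tendsto 0).mono_left nhdsWithin_le_nhds
  have key : asymptoticRadius y (midpoint ℝ u v) ^ 2 ≤ g 0 :=
    ge_of_tendsto hg <| eventually_nhdsWithin_of_forall fun ε (hε : 0 < ε) => by
      refine asymptoticRadius_sq_le_of_eventually hy ?_
      filter_upwards [eventually_dist_lt_asymptoticRadius_add hy u hε,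
        eventually_dist_lt_asymptoticRadius_add hy v hε] with k hu hv
      have := EuclideanGeometry.dist_sq_add_dist_sq_eq_two_mul_dist_midpoint_sq_add_half_dist_sq
        (y k) u v
      simp only [g]
      nlinarith [pow_le_pow_left₀ dist_nonneg hu.le 2, pow_le_pow_left₀ dist_nonneg hv.le 2]
  simpa [g] using key

theorem exists_isFixedPt_of_isBounded_range_iterate [ProperSpace E] {T : E → E}
    (hT : LipschitzWith 1 T) {x₀ : E} (hb : IsBounded (range fun k => T^[k] x₀)) :
    ∃ z, IsFixedPt T z := by
  set φ := asymptoticRadius fun k => T^[k] x₀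
  obtain ⟨z, hz⟩ := exists_forall_asymptoticRadius_le hb
  -- `T z` is again a minimiser of `φ`, and `φ²` is strictly convex
  have hmid := asymptoticRadius_midpoint_sq_le hb (T z) z
  have hzm : φ z ^ 2 ≤ φ (midpoint ℝ (T z) z) ^ 2 :=
    pow_le_pow_left₀ (asymptoticRadius_nonneg hb z) (hz _) 2
  have hTz : φ (T z) ^ 2 ≤ φ z ^ 2 :=
    pow_le_pow_left₀ (asymptoticRadius_nonneg hb _) (asymptoticRadius_iterate_apply_le hT hb z) 2
  have hdist : (dist (T z) z / 2) ^ 2 ≤ 0 := by linarith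
  exact ⟨z, (by simpa using hdist.antisymm (sq_nonneg _) : T z = z)⟩

end FixedPoint

section Convergence

lemma antitone_dist_iterate_of_isFixedPt {X : Type*} [PseudoMetricSpace X] {T : X → X}
    (hT : LipschitzWith 1 T) {p : X} (hp : IsFixedPt T p) (x₀ : X) :
    Antitone fun k => dist (T^[k] x₀) p :=
  antitone_nat_of_succ_le fun k => by
    simpa [iterate_succ_apply', hp.eq] using hT.dist_le_mul (T^[k] x₀) p

lemma tendsto_of_antitone_dist_of_subseq {X : Type*} [PseudoMetricSpace X] {x : ℕ → X} {p : X}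
    (hx : Antitone fun k => dist (x k) p) {ψ : ℕ → ℕ} (hψ : StrictMono ψ)
    (h : Tendsto (x ∘ ψ) atTop (𝓝 p)) : Tendsto x atTop (𝓝 p) := by
  rw [tendsto_iff_dist_tendsto_zero] at h ⊢
  have hinf := tendsto_atTop_ciInf hx ⟨0, by rintro _ ⟨k, rfl⟩; exact dist_nonneg⟩
  rwa [tendsto_nhds_unique (hinf.comp hψ.tendsto_atTop) h] at hinf

variable {E : Type*} [NormedAddCommGroup E] {c : ℝ} {T : E → E}

lemma StronglyNonexpansive.tendsto_norm_iterate_sub_apply (h : StronglyNonexpansive c T)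
    (hc : 0 < c) {z : E} (hz : IsFixedPt T z) (x₀ : E) :
    Tendsto (fun k => ‖T^[k] x₀ - T (T^[k] x₀)‖ ^ 2) atTop (𝓝 0) := by
  have step : ∀ x, ‖T x - z‖ ^ 2 + c * ‖x - T x‖ ^ 2 ≤ ‖x - z‖ ^ 2 := fun x => by
    simpa [hz.eq] using h x z
  have hsum : ∀ N, ∑ k ∈ Finset.range N, c * ‖T^[k] x₀ - T (T^[k] x₀)‖ ^ 2
      + ‖T^[N] x₀ - z‖ ^ 2 ≤ ‖x₀ - z‖ ^ 2 := by
    intro N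
    induction N with
    | zero => simp
    | succ N ih =>
      rw [Finset.sum_range_succ, iterate_succ_apply']
      linarith [step (T^[N] x₀)]
  have hsummable : Summable fun k => c * ‖T^[k] x₀ - T (T^[k] x₀)‖ ^ 2 :=
    summable_of_sum_range_le (c := ‖x₀ - z‖ ^ 2) (fun _ => by positivity)
      fun N => by linarith [hsum N, sq_nonneg ‖T^[N] x₀ - z‖]
  simpa [hc.ne'] using hsummable.tendsto_atTop_zero.const_mul c⁻¹

theorem StronglyNonexpansive.tendsto_iterate [ProperSpace E] (h : StronglyNonexpansive c T)
    (hc : 0 < c) {z : E} (hz : IsFixedPt T z) (x₀ : E) :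
    ∃ p, Tendsto (fun k => T^[k] x₀) atTop (𝓝 p) := by
  have hT := h.lipschitzWith hc.le
  obtain ⟨p, -, ψ, hψ, hxψ⟩ := (isCompact_closedBall z (dist x₀ z)).tendsto_subseq
    fun k => mem_closedBall.2 (antitone_dist_iterate_of_isFixedPt hT hz x₀ (Nat.zero_le k))
  have hp : IsFixedPt T p := by
    have hdisp : Continuous fun x => ‖x - T x‖ ^ 2 := by
      have := hT.continuous
      fun_prop
    have hzero := tendsto_nhds_unique ((hdisp.tendsto p).comp hxψ)
      ((h.tendsto_norm_iterate_sub_apply hc hz x₀).comp hψ.tendsto_atTop)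
    exact (by simpa [sub_eq_zero, eq_comm] using hzero : T p = p)
  exact ⟨p, tendsto_of_antitone_dist_of_subseq
    (antitone_dist_iterate_of_isFixedPt hT hp x₀) hψ hxψ⟩

end Convergence

theorem stmt12_general {n m S : ℕ}
    (C : Fin m → Set (EuclideanSpace ℝ (Fin n)))
    (hcv : ∀ i, Convex ℝ (C i))
    (P : Fin m → EuclideanSpace ℝ (Fin n) → EuclideanSpace ℝ (Fin n))
    (hP : ∀ i, IsProjOn (P i) (C i))
    (I : Fin S → List (Fin m))
    (ω : Fin S → ℝ) (hω : ∀ t, 0 < ω t) (hω1 : ∑ t, ω t = 1)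
    (hbdd : ∃ x0 : EuclideanSpace ℝ (Fin n),
      Bornology.IsBounded (Set.range fun k : ℕ => (strAvg P I ω)^[k] x0)) :
    ∀ x0 : EuclideanSpace ℝ (Fin n),
      ∃ z : EuclideanSpace ℝ (Fin n),
        Tendsto (fun k : ℕ => (strAvg P I ω)^[k] x0) atTop (nhds z) := by
  obtain ⟨c, hc, hT⟩ := exists_pos_stronglyNonexpansive_strAvg
    (fun i => (hP i).stronglyNonexpansive (hcv i)) I (fun t => (hω t).le) hω1
  obtain ⟨x₀, hb⟩ := hbdd
  obtain ⟨z, hz⟩ := exists_isFixedPt_of_isBounded_range_iterate (hT.lipschitzWith hc.le) hb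
  exact hT.tendsto_iterate hc hz

/-- Censor–Tom: if the string-averaging projection sequence is bounded for at least one
starting point, then it converges for every starting point. -/
theorem stmt12 {n m S : ℕ}
    (C : Fin m → Set (EuclideanSpace ℝ (Fin n)))
    (hne : ∀ i, (C i).Nonempty) (hcl : ∀ i, IsClosed (C i)) (hcv : ∀ i, Convex ℝ (C i))
    (P : Fin m → EuclideanSpace ℝ (Fin n) → EuclideanSpace ℝ (Fin n))
    (hP : ∀ i, IsProjOn (P i) (C i))
    (I : Fin S → List (Fin m)) (hI : ∀ t, I t ≠ [])
    (ω : Fin S → ℝ) (hω : ∀ t, 0 < ω t) (hω1 : ∑ t, ω t = 1)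
    (hbdd : ∃ x0 : EuclideanSpace ℝ (Fin n),
      Bornology.IsBounded (Set.range fun k : ℕ => (strAvg P I ω)^[k] x0)) :
    ∀ x0 : EuclideanSpace ℝ (Fin n),
      ∃ z : EuclideanSpace ℝ (Fin n),
        Tendsto (fun k : ℕ => (strAvg P I ω)^[k] x0) atTop (nhds z) :=
  stmt12_general C hcv P hP I ω hω hω1 hbdd
end

section
/- Let g₀, g₁, …, g_{m−1} : ℝⁿ → ℝ be convex functions that are continuously differentiable everywhere, let g(x) := Σ_{i=0}^{m−1} g_i(x), and assume g attains an unconstrained (global) minimum. Let (σ_k)_{k≥0} be positive reals with lim_{k→∞} σ_k = 0, Σ_{k=0}^∞ σ_k = +∞, and lim_{k→∞} σ_{km+j}/σ_{km} = 1 for all 1 ≤ j ≤ m−1 (m-steering parameters). From an arbitrary x⁰ ∈ ℝⁿ, generate x^{k+1} = x^k − σ_k·∇g_{i(k)}(x^k) with cyclic control i(k) = k mod m. If the sequence (x^k)_{k≥0} is bounded, then g(x^k) converges to the minimum value of g; if, in addition, g has a unique minimizer, then (x^k)_{k≥0} converges to this minimizer. -/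
/-!
Grouping the iterates in blocks of `m`, the points `y k = x (k * m)` satisfy
`y (k + 1) = y k - σ (k * m) • v k`, where `v k - ∇G (y k) → 0`: inside a block the iterates move
by `O(σ)`, the gradients are uniformly continuous on the compact closure of the orbit, and the
steering condition makes every step length of a block asymptotic to `σ (k * m)`. Convexity gives
`G (y (k + 1)) ≤ G (y k) - σ (k * m) * ⟪∇G (y (k + 1)), v k⟫`, and on a compact set the gradient
is bounded away from `0` where `G` exceeds its minimum by some `η > 0`. Since `∑ σ (k * m) = ∞`,
`G (y k)` cannot stay `η` above the minimum, and since the steps vanish it cannot climb back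
either. The iterates inside a block follow the block start, and convergence to a unique minimiser
follows by compactness.
-/

open Filter Topology Set InnerProductSpace Uniformity

section Descent

variable {δ τ c : ℕ → ℝ}

theorem tendsto_atBot_of_eventually_le_sub_mul {μ : ℝ} (hμ : 0 < μ)
    (hτ : Tendsto (fun N => ∑ k ∈ Finset.range N, τ k) atTop atTop)
    (h : ∀ᶠ k in atTop, δ (k + 1) ≤ δ k - μ * τ k) : Tendsto δ atTop atBot := by
  obtain ⟨N, hN⟩ := eventually_atTop.1 h
  set S := fun n => ∑ k ∈ Finset.range n, τ k
  have hδS : ∀ k ≥ N, δ k + μ * S k ≤ δ N + μ * S N := by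
    intro k hk
    induction k, hk using Nat.le_induction with
    | base => exact le_rfl
    | succ k hk ih =>
      simp only [S, Finset.sum_range_succ] at ih ⊢
      linarith [hN k hk]
  refine tendsto_atBot_mono' atTop (eventually_atTop.2 ⟨N, fun k hk => ?_⟩)
    (tendsto_atBot_add_const_left atTop (δ N + μ * S N)
      (tendsto_neg_atTop_atBot.comp (hτ.const_mul_atTop hμ)))
  simp only [Function.comp_apply]
  linarith [hδS k hk]

theorem frequently_lt_of_le_sub_mul (hδ : ∀ k, 0 ≤ δ k) (hτ : ∀ k, 0 ≤ τ k)
    (hτsum : Tendsto (fun N => ∑ k ∈ Finset.range N, τ k) atTop atTop)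
    (hdesc : ∀ k, δ (k + 1) ≤ δ k - τ k * c k) {η μ : ℝ} (hμ : 0 < μ)
    (hc : ∀ᶠ k in atTop, η ≤ δ k → μ ≤ c k) : ∃ᶠ k in atTop, δ k < η := by
  by_contra hfreq
  have hstep : ∀ᶠ k in atTop, δ (k + 1) ≤ δ k - μ * τ k := by
    filter_upwards [not_frequently.1 hfreq, hc] with k hk hck
    nlinarith [hdesc k, hck (not_lt.1 hk), hτ k]
  obtain ⟨k, hk⟩ :=
    ((tendsto_atBot_of_eventually_le_sub_mul hμ hτsum hstep).eventually_lt_atBot 0).exists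
  exact (hδ k).not_gt hk

theorem tendsto_zero_of_le_sub_mul (hδ : ∀ k, 0 ≤ δ k) (hτ : ∀ k, 0 ≤ τ k)
    (hτsum : Tendsto (fun N => ∑ k ∈ Finset.range N, τ k) atTop atTop)
    (hτc : Tendsto (fun k => τ k * c k) atTop (𝓝 0))
    (hdesc : ∀ k, δ (k + 1) ≤ δ k - τ k * c k)
    (hc : ∀ η > 0, ∃ μ > 0, ∀ᶠ k in atTop, η ≤ δ k → μ ≤ c k) :
    Tendsto δ atTop (𝓝 0) := by
  refine tendsto_order.2 ⟨fun a ha => Eventually.of_forall fun k => ha.trans_le (hδ k),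
    fun ε hε => ?_⟩
  obtain ⟨μ, hμ, hcμ⟩ := hc (ε / 2) (half_pos hε)
  obtain ⟨N, hN⟩ := eventually_atTop.1
    (hcμ.and (hτc.eventually (lt_mem_nhds (neg_lt_zero.2 (half_pos hε)))))
  obtain ⟨k₀, hk₀, hδk₀⟩ := ((frequently_lt_of_le_sub_mul hδ hτ hτsum hdesc hμ hcμ).and_eventually
    (eventually_ge_atTop N)).exists
  -- Once below `ε / 2`, the sequence cannot climb above `ε`: it only increases while below `ε / 2`,
  -- and then by less than `ε / 2`.
  have hbound : ∀ k ≥ k₀, δ k < ε := by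
    intro k hk
    induction k, hk using Nat.le_induction with
    | base => linarith
    | succ k hk ih =>
      obtain ⟨hck, hτck⟩ := hN k (hδk₀.trans hk)
      by_cases hlarge : ε / 2 ≤ δ k
      · nlinarith [hdesc k, hck hlarge, hτ k]
      · linarith [hdesc k]
  exact eventually_atTop.2 ⟨k₀, hbound⟩

end Descent

section NormedGroup

variable {E F : Type*} [SeminormedAddCommGroup E] [SeminormedAddCommGroup F]

theorem IsCompact.tendsto_sub_comp_of_tendsto_sub {α : Type*} {l : Filter α} {K : Set E}
    (hK : IsCompact K) {f : E → F} (hf : ContinuousOn f K) {u w : α → E}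
    (hu : ∀ i, u i ∈ K) (hw : ∀ i, w i ∈ K) (huw : Tendsto (fun i => u i - w i) l (𝓝 0)) :
    Tendsto (fun i => f (u i) - f (w i)) l (𝓝 0) := by
  have hpair : Tendsto (fun i => (w i, u i)) l (𝓤 E ⊓ 𝓟 (K ×ˢ K)) := by
    refine tendsto_inf.2 ⟨?_, tendsto_principal.2 (Eventually.of_forall fun i => ⟨hw i, hu i⟩)⟩
    rw [uniformity_eq_comap_nhds_zero]
    exact tendsto_comap_iff.2 huw
  have := Tendsto.comp (hK.uniformContinuousOn_of_continuous hf) hpair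
  rw [uniformity_eq_comap_nhds_zero] at this
  exact tendsto_comap_iff.1 this

theorem tendsto_sub_add_of_tendsto_succ_sub {x : ℕ → E}
    (hx : Tendsto (fun k => x (k + 1) - x k) atTop (𝓝 0)) (j : ℕ) :
    Tendsto (fun k => x (k + j) - x k) atTop (𝓝 0) := by
  induction j with
  | zero => simpa using tendsto_const_nhds
  | succ j ih =>
    have hsplit : ∀ k, x (k + (j + 1)) - x k = (x (k + j + 1) - x (k + j)) + (x (k + j) - x k) :=
      fun k => by rw [← add_assoc]; abel
    simpa [hsplit] using (hx.comp (tendsto_add_atTop_nat j)).add ih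

end NormedGroup

theorem tendsto_of_forall_tendsto_mul_add {α : Type*} {l : Filter α} {f : ℕ → α} {m : ℕ}
    (hm : 0 < m) (h : ∀ j < m, Tendsto (fun k => f (k * m + j)) atTop l) :
    Tendsto f atTop l := by
  intro U hU
  obtain ⟨N, hN⟩ :=
    eventually_atTop.1 ((Set.finite_lt_nat m).eventually_all.2 fun j hj => h j hj hU)
  refine eventually_atTop.2 ⟨N * m, fun t ht => ?_⟩
  have : f (t / m * m + t % m) ∈ U :=
    hN (t / m) ((Nat.le_div_iff_mul_le hm).2 ht) (t % m) (Nat.mod_lt t hm)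
  rwa [Nat.div_add_mod' t m] at this

theorem tendsto_sum_range_mul_atTop {σ : ℕ → ℝ} {m : ℕ} {C : ℝ} (hm : 0 < m)
    (hσ : ∀ k, 0 ≤ σ k) (hσsum : Tendsto (fun N => ∑ k ∈ Finset.range N, σ k) atTop atTop)
    (hC : ∀ j < m, ∀ᶠ k in atTop, σ (k * m + j) ≤ C * σ (k * m)) :
    Tendsto (fun N => ∑ k ∈ Finset.range N, σ (k * m)) atTop atTop := by
  have hblock : ∀ N, ∑ t ∈ Finset.range (N * m), σ t =
      ∑ k ∈ Finset.range N, ∑ j ∈ Finset.range m, σ (k * m + j) := by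
    intro N
    induction N with
    | zero => simp
    | succ N ih => rw [add_mul, one_mul, Finset.sum_range_add, ih, Finset.sum_range_succ]
  have hblock_nonneg : ∀ k, 0 ≤ ∑ j ∈ Finset.range m, σ (k * m + j) :=
    fun k => Finset.sum_nonneg fun j _ => hσ _
  rw [← not_summable_iff_tendsto_nat_atTop_of_nonneg fun k => hσ _]
  intro hsum
  refine (not_summable_iff_tendsto_nat_atTop_of_nonneg hblock_nonneg).2 ?_
    ((hsum.mul_left (m * C)).of_norm_bounded_eventually_nat ?_)
  · simpa only [← hblock, Function.comp_def, id] using hσsum.comp (tendsto_id.atTop_mul_const' hm)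
  · filter_upwards [(eventually_all_finset (Finset.range m)).2
      fun j hj => hC j (Finset.mem_range.1 hj)] with k hk
    rw [Real.norm_of_nonneg (hblock_nonneg k), mul_assoc]
    calc ∑ j ∈ Finset.range m, σ (k * m + j) ≤ ∑ j ∈ Finset.range m, C * σ (k * m) :=
          Finset.sum_le_sum hk
      _ = m * (C * σ (k * m)) := by simp

theorem IsCompact.tendsto_nhds_of_tendsto_comp_of_unique {X Y α : Type*} [TopologicalSpace X]
    [TopologicalSpace Y] [T2Space Y] {K : Set X} (hK : IsCompact K) {f : X → Y}
    (hf : Continuous f) {l : Filter α} {u : α → X} (huK : ∀ i, u i ∈ K) {a : X}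
    (hfu : Tendsto (f ∘ u) l (𝓝 (f a))) (ha : ∀ z ∈ K, f z = f a → z = a) :
    Tendsto u l (𝓝 a) :=
  hK.tendsto_nhds_of_unique_mapClusterPt (Eventually.of_forall huK) fun z hz hzu =>
    ha z hz (eq_of_nhds_neBot (ClusterPt.mono (hzu.continuousAt_comp hf.continuousAt) hfu))

theorem tendsto_inner_zero_of_isBoundedUnder {E : Type*} [SeminormedAddCommGroup E]
    [InnerProductSpace ℝ E] {α : Type*} {l : Filter α} {a b : α → E}
    (ha : IsBoundedUnder (· ≤ ·) l fun i => ‖a i‖) (hb : Tendsto b l (𝓝 0)) :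
    Tendsto (fun i => ⟪a i, b i⟫_ℝ) l (𝓝 0) := by
  have hbn : Tendsto (fun i => ‖b i‖) l (𝓝 0) := by simpa using hb.norm
  refine squeeze_zero_norm (fun i => norm_inner_le_norm (a i) (b i)) ?_
  simpa only [mul_comm] using hbn.zero_mul_isBoundedUnder_le (by simpa [Function.comp_def] using ha)

section Gradient

variable {E : Type*} [NormedAddCommGroup E] [InnerProductSpace ℝ E] [CompleteSpace E]

theorem ConvexOn.add_inner_gradient_le {f : E → ℝ} (hf : ConvexOn ℝ univ f) {x : E}
    (hfx : DifferentiableAt ℝ f x) (y : E) : f x + ⟪gradient f x, y - x⟫_ℝ ≤ f y := by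
  have hline : ConvexOn ℝ univ (f ∘ (AffineMap.lineMap x y : ℝ →ᵃ[ℝ] E)) := by
    simpa using hf.comp_affineMap (AffineMap.lineMap x y : ℝ →ᵃ[ℝ] E)
  have hderiv : HasDerivAt (f ∘ (AffineMap.lineMap x y : ℝ →ᵃ[ℝ] E)) (fderiv ℝ f x (y - x)) 0 := by
    have hfx' : HasFDerivAt f (fderiv ℝ f x) (AffineMap.lineMap x y (0 : ℝ)) := by
      simpa using hfx.hasFDerivAt
    exact hfx'.comp_hasDerivAt 0 AffineMap.hasDerivAt_lineMap
  have := hline.le_slope_of_hasDerivAt (mem_univ 0) (mem_univ 1) one_pos hderiv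
  simp only [slope, Function.comp_apply, AffineMap.lineMap_apply_zero,
    AffineMap.lineMap_apply_one, vsub_eq_sub, sub_zero, inv_one, smul_eq_mul, one_mul] at this
  rw [inner_gradient_left]
  linarith

theorem ContDiff.continuous_gradient {f : E → ℝ} (hf : ContDiff ℝ 1 f) :
    Continuous (gradient f) :=
  (InnerProductSpace.toDual ℝ E).symm.continuous.comp (hf.continuous_fderiv one_ne_zero)

theorem gradient_fun_sum {ι : Type*} (s : Finset ι) {f : ι → E → ℝ} {x : E}
    (hf : ∀ i ∈ s, DifferentiableAt ℝ (f i) x) :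
    gradient (fun y => ∑ i ∈ s, f i y) x = ∑ i ∈ s, gradient (f i) x := by
  simp only [gradient, fderiv_fun_sum hf, map_sum]

theorem ConvexOn.exists_pos_le_norm_gradient {f : E → ℝ} (hf : ConvexOn ℝ univ f)
    (hf1 : ContDiff ℝ 1 f) (a : E) {K : Set E} (hK : IsCompact K)
    {η : ℝ} (hη : 0 < η) : ∃ μ > 0, ∀ z ∈ K, f a + η ≤ f z → μ ≤ ‖gradient f z‖ := by
  set S := K ∩ {z | f a + η ≤ f z}
  rcases S.eq_empty_or_nonempty with hS | hS
  · exact ⟨1, one_pos, fun z hz hfz => absurd ⟨hz, hfz⟩ (Set.eq_empty_iff_forall_notMem.1 hS z)⟩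
  have hScompact : IsCompact S := hK.inter_right (isClosed_le continuous_const hf1.continuous)
  obtain ⟨z₀, hz₀, hmin⟩ :=
    hScompact.exists_isMinOn hS (continuous_norm.comp hf1.continuous_gradient).continuousOn
  refine ⟨‖gradient f z₀‖, norm_pos_iff.2 fun hzero => ?_, fun z hz hfz => hmin ⟨hz, hfz⟩⟩
  have := hf.add_inner_gradient_le (hf1.differentiable one_ne_zero z₀) a
  rw [hzero, inner_zero_left] at this
  have h2 : f a + η ≤ f z₀ := hz₀.2
  linarith

theorem tendsto_smul_of_tendsto_sub_gradient {f : E → ℝ} (hf1 : ContDiff ℝ 1 f) {K : Set E}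
    (hK : IsCompact K) {y v : ℕ → E} {τ : ℕ → ℝ} (hyK : ∀ k, y k ∈ K)
    (hτ0 : Tendsto τ atTop (𝓝 0)) (hv : Tendsto (fun k => v k - gradient f (y k)) atTop (𝓝 0)) :
    Tendsto (fun k => τ k • v k) atTop (𝓝 0) := by
  obtain ⟨M, hM⟩ := hK.exists_bound_of_continuousOn hf1.continuous_gradient.continuousOn
  have hgrad : Tendsto (fun k => τ k • gradient f (y k)) atTop (𝓝 0) :=
    hτ0.zero_smul_isBoundedUnder_le (isBoundedUnder_of ⟨M, fun k => hM _ (hyK k)⟩)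
  simpa [smul_sub] using (hτ0.smul hv).add hgrad

theorem tendsto_of_approx_gradient_descent {f : E → ℝ} (hf : ConvexOn ℝ univ f)
    (hf1 : ContDiff ℝ 1 f) {a : E} (ha : ∀ z, f a ≤ f z) {K : Set E} (hK : IsCompact K)
    {y v : ℕ → E} {τ : ℕ → ℝ} (hyK : ∀ k, y k ∈ K) (hτ : ∀ k, 0 ≤ τ k)
    (hτ0 : Tendsto τ atTop (𝓝 0))
    (hτsum : Tendsto (fun N => ∑ k ∈ Finset.range N, τ k) atTop atTop)
    (hy : ∀ k, y (k + 1) = y k - τ k • v k)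
    (hv : Tendsto (fun k => v k - gradient f (y k)) atTop (𝓝 0)) :
    Tendsto (fun k => f (y k)) atTop (𝓝 (f a)) := by
  -- Convexity at the new point `y (k + 1)` yields a descent inequality with no Lipschitz constant.
  set c := fun k => ⟪gradient f (y (k + 1)), v k⟫_ℝ
  obtain ⟨M, hM⟩ := hK.exists_bound_of_continuousOn hf1.continuous_gradient.continuousOn
  have hgrad_bdd : ∀ j, IsBoundedUnder (· ≤ ·) atTop fun k => ‖gradient f (y (k + j))‖ :=
    fun j => isBoundedUnder_of ⟨M, fun k => hM _ (hyK _)⟩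
  have hτv := tendsto_smul_of_tendsto_sub_gradient hf1 hK hyK hτ0 hv
  have hstep : Tendsto (fun k => gradient f (y (k + 1)) - gradient f (y k)) atTop (𝓝 0) :=
    hK.tendsto_sub_comp_of_tendsto_sub hf1.continuous_gradient.continuousOn (fun k => hyK _) hyK
      (by simpa [hy] using hτv.neg)
  have hc : Tendsto (fun k => c k - ‖gradient f (y k)‖ ^ 2) atTop (𝓝 0) := by
    have hsplit : ∀ k, c k - ‖gradient f (y k)‖ ^ 2 =
        ⟪gradient f (y (k + 1)), v k - gradient f (y k)⟫_ℝ +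
          ⟪gradient f (y k), gradient f (y (k + 1)) - gradient f (y k)⟫_ℝ := fun k => by
      simp only [c, inner_sub_right, real_inner_self_eq_norm_sq, real_inner_comm]
      ring
    simpa [hsplit] using (tendsto_inner_zero_of_isBoundedUnder (hgrad_bdd 1) hv).add
      (tendsto_inner_zero_of_isBoundedUnder (hgrad_bdd 0) hstep)
  have hdesc : ∀ k, f (y (k + 1)) - f a ≤ f (y k) - f a - τ k * c k := fun k => by
    have hdiff : y k - y (k + 1) = τ k • v k := by rw [hy k, sub_sub_cancel]
    have := hf.add_inner_gradient_le (hf1.differentiable one_ne_zero (y (k + 1))) (y k)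
    rw [hdiff, real_inner_smul_right] at this
    linarith
  have hlower : ∀ η > 0, ∃ μ > 0, ∀ᶠ k in atTop, η ≤ f (y k) - f a → μ ≤ c k := by
    intro η hη
    obtain ⟨μ, hμ, hμle⟩ := hf.exists_pos_le_norm_gradient hf1 a hK hη
    refine ⟨μ ^ 2 / 2, by positivity, ?_⟩
    filter_upwards [hc.eventually (lt_mem_nhds (neg_lt_zero.2 (by positivity : 0 < μ ^ 2 / 2)))]
      with k hk hηk
    have := hμle _ (hyK k) (by linarith)
    nlinarith
  have hτc : Tendsto (fun k => τ k * c k) atTop (𝓝 0) := by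
    simpa [c, real_inner_smul_right] using tendsto_inner_zero_of_isBoundedUnder (hgrad_bdd 1) hτv
  have := tendsto_zero_of_le_sub_mul (δ := fun k => f (y k) - f a) (fun k => sub_nonneg.2 (ha _))
    hτ hτsum hτc hdesc hlower
  simpa using this.add_const (f a)

variable {σ : ℕ → ℝ} {x : ℕ → E}

theorem tendsto_succ_sub_of_gradient_steps {ι : Type*} [Finite ι] {g : ι → E → ℝ}
    (hg : ∀ i, ContDiff ℝ 1 (g i)) {K : Set E} (hK : IsCompact K) (hxK : ∀ k, x k ∈ K)
    (hσ0 : Tendsto σ atTop (𝓝 0)) {i : ℕ → ι}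
    (hx : ∀ k, x (k + 1) = x k - σ k • gradient (g (i k)) (x k)) :
    Tendsto (fun k => x (k + 1) - x k) atTop (𝓝 0) := by
  choose C hC using fun j => hK.exists_bound_of_continuousOn (hg j).continuous_gradient.continuousOn
  obtain ⟨M, hM⟩ := Finite.exists_le C
  have := hσ0.zero_smul_isBoundedUnder_le (g := fun k => gradient (g (i k)) (x k))
    (isBoundedUnder_of ⟨M, fun k => (hC _ _ (hxK k)).trans (hM _)⟩)
  simpa [hx] using this.neg

variable {m : ℕ} {g : Fin m → E → ℝ}

theorem succ_mul_eq_sub_smul_sum_of_cyclic [NeZero m] (hσ : ∀ k, σ k ≠ 0)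
    (hx : ∀ k, x (k + 1) = x k - σ k • gradient (g (Fin.ofNat m k)) (x k)) (k : ℕ) :
    x ((k + 1) * m) = x (k * m) -
      σ (k * m) • ∑ j : Fin m, (σ (k * m + j) / σ (k * m)) • gradient (g j) (x (k * m + j)) := by
  have htel := Finset.sum_range_sub (fun l => x (k * m + l)) m
  simp only [← add_assoc, hx, sub_sub_cancel_left, Finset.sum_neg_distrib, add_zero] at htel
  rw [← Fin.sum_univ_eq_sum_range
    (fun l => σ (k * m + l) • gradient (g (Fin.ofNat m (k * m + l))) (x (k * m + l)))] at htel
  have hfin : ∀ j : Fin m, Fin.ofNat m (k * m + j) = j := fun j => by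
    ext; simp [Nat.mod_eq_of_lt j.isLt]
  simp only [hfin] at htel
  rw [Finset.smul_sum]
  simp_rw [smul_smul, mul_div_cancel₀ _ (hσ _)]
  rw [add_mul, one_mul]
  linear_combination (norm := module) -htel

theorem tendsto_sum_ratio_smul_gradient_sub (hg : ∀ i, ContDiff ℝ 1 (g i)) {K : Set E}
    (hK : IsCompact K) (hxK : ∀ k, x k ∈ K) (hstep : Tendsto (fun k => x (k + 1) - x k) atTop (𝓝 0))
    (hratio : ∀ j : Fin m, Tendsto (fun k => σ (k * m + j) / σ (k * m)) atTop (𝓝 1)) :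
    Tendsto (fun k => ∑ j : Fin m, (σ (k * m + j) / σ (k * m)) • gradient (g j) (x (k * m + j)) -
      ∑ j : Fin m, gradient (g j) (x (k * m))) atTop (𝓝 0) := by
  have hterm : ∀ j : Fin m, Tendsto (fun k => (σ (k * m + j) / σ (k * m)) •
      gradient (g j) (x (k * m + j)) - gradient (g j) (x (k * m))) atTop (𝓝 0) := by
    intro j
    obtain ⟨C, hC⟩ := hK.exists_bound_of_continuousOn (hg j).continuous_gradient.continuousOn
    have hratio' : Tendsto (fun k => σ (k * m + j) / σ (k * m) - 1) atTop (𝓝 0) := by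
      simpa using (hratio j).sub_const 1
    have hclose : Tendsto (fun k => x (k * m + j) - x (k * m)) atTop (𝓝 0) :=
      (tendsto_sub_add_of_tendsto_succ_sub hstep j).comp (tendsto_id.atTop_mul_const' j.pos)
    have hfirst := hratio'.zero_smul_isBoundedUnder_le
      (g := fun k => gradient (g j) (x (k * m + j))) (isBoundedUnder_of ⟨C, fun k => hC _ (hxK _)⟩)
    have hsecond := hK.tendsto_sub_comp_of_tendsto_sub (hg j).continuous_gradient.continuousOn
      (fun k => hxK _) (fun k => hxK _) hclose
    simpa [sub_smul] using hfirst.add hsecond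
  simpa [Finset.sum_sub_distrib] using tendsto_finsetSum Finset.univ fun j _ => hterm j

theorem tendsto_sum_apply_of_cyclic [NeZero m] (hconv : ∀ i, ConvexOn ℝ univ (g i))
    (hg : ∀ i, ContDiff ℝ 1 (g i)) {a : E} (ha : ∀ z, ∑ i, g i a ≤ ∑ i, g i z) {K : Set E}
    (hK : IsCompact K) (hxK : ∀ k, x k ∈ K) (hσpos : ∀ k, 0 < σ k)
    (hσ0 : Tendsto σ atTop (𝓝 0))
    (hσsum : Tendsto (fun N => ∑ k ∈ Finset.range N, σ k) atTop atTop)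
    (hratio : ∀ j : Fin m, Tendsto (fun k => σ (k * m + j) / σ (k * m)) atTop (𝓝 1))
    (hx : ∀ k, x (k + 1) = x k - σ k • gradient (g (Fin.ofNat m k)) (x k)) :
    Tendsto (fun k => ∑ i, g i (x k)) atTop (𝓝 (∑ i, g i a)) := by
  have hm : 0 < m := NeZero.pos m
  have hmul : Tendsto (fun k => k * m) atTop atTop := tendsto_id.atTop_mul_const' hm
  have hGconv : ConvexOn ℝ univ fun z => ∑ i, g i z := by
    rw [← Finset.sum_fn]
    exact Finset.sum_induction _ _ (fun _ _ => ConvexOn.add) (convexOn_const 0 convex_univ)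
      fun i _ => hconv i
  have hG1 : ContDiff ℝ 1 fun z => ∑ i, g i z := ContDiff.sum fun i _ => hg i
  have hgradG : ∀ z, gradient (fun z => ∑ i, g i z) z = ∑ i, gradient (g i) z := fun z =>
    gradient_fun_sum _ fun i _ => (hg i).differentiable one_ne_zero z
  have hratio_le : ∀ j < m, ∀ᶠ k in atTop, σ (k * m + j) ≤ 2 * σ (k * m) := fun j hj =>
    ((hratio ⟨j, hj⟩).eventually (gt_mem_nhds one_lt_two)).mono fun k hk =>
      (div_le_iff₀ (hσpos _)).1 hk.le
  have hstep := tendsto_succ_sub_of_gradient_steps hg hK hxK hσ0 hx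
  have hblock : Tendsto (fun k => ∑ i, g i (x (k * m))) atTop (𝓝 (∑ i, g i a)) :=
    tendsto_of_approx_gradient_descent hGconv hG1 ha hK (fun k => hxK _)
      (fun k => (hσpos _).le) (hσ0.comp hmul)
      (tendsto_sum_range_mul_atTop hm (fun k => (hσpos k).le) hσsum hratio_le)
      (succ_mul_eq_sub_smul_sum_of_cyclic (fun k => (hσpos k).ne') hx)
      (by simpa only [hgradG] using tendsto_sum_ratio_smul_gradient_sub hg hK hxK hstep hratio)
  refine tendsto_of_forall_tendsto_mul_add hm fun j _ => ?_
  have hclose := hK.tendsto_sub_comp_of_tendsto_sub hG1.continuous.continuousOn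
    (fun k => hxK (k * m + j)) (fun k => hxK _)
    ((tendsto_sub_add_of_tendsto_succ_sub hstep j).comp hmul)
  simpa using hclose.add hblock

end Gradient

theorem stmt13_general {n m : ℕ} [NeZero m]
    (g : Fin m → EuclideanSpace ℝ (Fin n) → ℝ)
    (hconv : ∀ i, ConvexOn ℝ Set.univ (g i))
    (hdiff : ∀ i, ContDiff ℝ 1 (g i))
    (G : EuclideanSpace ℝ (Fin n) → ℝ) (hG : G = fun x => ∑ i, g i x)
    (σ : ℕ → ℝ) (hσpos : ∀ k, 0 < σ k)
    (hσ0 : Tendsto σ atTop (nhds 0))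
    (hσsum : Tendsto (fun K : ℕ => ∑ k ∈ Finset.range K, σ k) atTop atTop)
    (hσsteer : ∀ j : ℕ, 1 ≤ j → j ≤ m - 1 →
      Tendsto (fun k : ℕ => σ (k * m + j) / σ (k * m)) atTop (nhds 1))
    (x : ℕ → EuclideanSpace ℝ (Fin n))
    (hx : ∀ k : ℕ, x (k + 1) = x k -
      σ k • gradient (g ⟨k % m, Nat.mod_lt k (Nat.pos_of_ne_zero (NeZero.ne m))⟩) (x k))
    (hbdd : Bornology.IsBounded (Set.range x)) :
    (∀ xs : EuclideanSpace ℝ (Fin n), (∀ y, G xs ≤ G y) →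
      Tendsto (fun k : ℕ => G (x k)) atTop (nhds (G xs))) ∧
    (∀ xs : EuclideanSpace ℝ (Fin n), (∀ y, G xs ≤ G y) →
      (∀ z : EuclideanSpace ℝ (Fin n), (∀ y, G z ≤ G y) → z = xs) →
      Tendsto x atTop (nhds xs)) := by
  have hK : IsCompact (closure (range x)) := hbdd.isCompact_closure
  have hxK : ∀ k, x k ∈ closure (range x) := fun k => subset_closure (mem_range_self k)
  have hratio : ∀ j : Fin m, Tendsto (fun k => σ (k * m + j) / σ (k * m)) atTop (𝓝 1) := by
    intro j
    rcases Nat.eq_zero_or_pos j with hj | hj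
    · simp [hj, div_self (hσpos _).ne']
    · exact hσsteer j hj (Nat.le_sub_one_of_lt j.isLt)
  have hGx : ∀ xs, (∀ y, G xs ≤ G y) → Tendsto (fun k => G (x k)) atTop (𝓝 (G xs)) := by
    subst hG
    -- `Fin.ofNat m k` unfolds to the index `⟨k % m, _⟩` used in `hx`.
    exact fun xs hxs => tendsto_sum_apply_of_cyclic hconv hdiff hxs hK hxK hσpos hσ0 hσsum hratio hx
  have hGcont : Continuous G := hG ▸ continuous_finsetSum _ fun i _ => (hdiff i).continuous
  exact ⟨hGx, fun xs hxs huniq => hK.tendsto_nhds_of_tendsto_comp_of_unique hGcont hxK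
    (hGx xs hxs) fun z _ hz => huniq z (hz ▸ hxs)⟩

/-- Censor–De Pierro–Zaknoon: the m-steered cyclic gradient method.  If the generated
sequence is bounded, then `g(x^k)` converges to the minimum of `g = Σ gᵢ`; if moreover the
minimizer of `g` is unique, the sequence `(x^k)` converges to it. -/
theorem stmt13 {n m : ℕ} [NeZero m]
    (g : Fin m → EuclideanSpace ℝ (Fin n) → ℝ)
    (hconv : ∀ i, ConvexOn ℝ Set.univ (g i))
    (hdiff : ∀ i, ContDiff ℝ 1 (g i))
    (G : EuclideanSpace ℝ (Fin n) → ℝ) (hG : G = fun x => ∑ i, g i x)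
    (hmin : ∃ xs : EuclideanSpace ℝ (Fin n), ∀ y, G xs ≤ G y)
    (σ : ℕ → ℝ) (hσpos : ∀ k, 0 < σ k)
    (hσ0 : Tendsto σ atTop (nhds 0))
    (hσsum : Tendsto (fun K : ℕ => ∑ k ∈ Finset.range K, σ k) atTop atTop)
    (hσsteer : ∀ j : ℕ, 1 ≤ j → j ≤ m - 1 →
      Tendsto (fun k : ℕ => σ (k * m + j) / σ (k * m)) atTop (nhds 1))
    (x : ℕ → EuclideanSpace ℝ (Fin n))
    (hx : ∀ k : ℕ, x (k + 1) = x k -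
      σ k • gradient (g ⟨k % m, Nat.mod_lt k (Nat.pos_of_ne_zero (NeZero.ne m))⟩) (x k))
    (hbdd : Bornology.IsBounded (Set.range x)) :
    (∀ xs : EuclideanSpace ℝ (Fin n), (∀ y, G xs ≤ G y) →
      Tendsto (fun k : ℕ => G (x k)) atTop (nhds (G xs))) ∧
    (∀ xs : EuclideanSpace ℝ (Fin n), (∀ y, G xs ≤ G y) →
      (∀ z : EuclideanSpace ℝ (Fin n), (∀ y, G z ≤ G y) → z = xs) →
      Tendsto x atTop (nhds xs)) :=
  stmt13_general g hconv hdiff G hG σ hσpos hσ0 hσsum hσsteer x hx hbdd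
end

section
/- Let H be a real Hilbert space with dim H ≥ 2 and let m ≥ 3 be an integer. For an ordered family (C₁, …, C_m) of nonempty closed convex subsets of H with projections P₁, …, P_m, define the set of cycles cyc(C₁, …, C_m) := {(ȳ₁, …, ȳ_m) ∈ Hᵐ : ȳ₁ = P₁(ȳ₂), ȳ₂ = P₂(ȳ₃), …, ȳ_{m−1} = P_{m−1}(ȳ_m), ȳ_m = P_m(ȳ₁)}. Then there exists no function Φ : Hᵐ → ℝ such that for every ordered family (C₁, …, C_m) of nonempty closed convex subsets of H, cyc(C₁, …, C_m) equals the set of solutions of the variational problem: minimize Φ(y₁, …, y_m) subject to y₁ ∈ C₁, …, y_m ∈ C_m; i.e. such that cyc(C₁, …, C_m) = {(y₁, …, y_m) ∈ C₁ × ⋯ × C_m : Φ(y₁, …, y_m) ≤ Φ(z₁, …, z_m) for all (z₁, …, z_m) ∈ C₁ × ⋯ × C_m}. -/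
/-!
Suppose `Φ` characterizes the cycles. Take `C j = H` and `C i = {a i}` for `i ≠ j`: the only
cycle is `a` with its `j`-th entry replaced by `a (j + 1)`, whereas `a` itself is feasible but
not a cycle. Hence this replacement strictly decreases `Φ` whenever it changes `a`. For `m ≥ 3`
two such replacements move a single nonzero entry `u` from position `k + 1` to position `k`
(through the configuration with `u` at both `k` and `k + 1`), so `k ↦ Φ (Pi.single k u)` strictly
increases along the cycle `k ↦ k + 1` of `Fin m`, which is impossible.
-/

open Function Set

section

variable {H : Type*} [NormedAddCommGroup H]

theorem isProjOn_id_univ : IsProjOn (id : H → H) univ :=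
  fun _ => ⟨trivial, fun _ _ => by simp⟩

theorem isProjOn_const_singleton (a : H) : IsProjOn (fun _ => a) {a} :=
  fun _ => ⟨rfl, fun _ hy => hy ▸ le_rfl⟩

variable [NormedSpace ℝ H] {m : ℕ} [NeZero m]

def VariationallyCharacterizesCycles (Φ : (Fin m → H) → ℝ) : Prop :=
  ∀ C : Fin m → Set H,
    (∀ i, (C i).Nonempty) → (∀ i, IsClosed (C i)) → (∀ i, Convex ℝ (C i)) →
    ∀ P : Fin m → H → H, (∀ i, IsProjOn (P i) (C i)) →
      {y : Fin m → H | ∀ i : Fin m, y i = P i (y (i + 1))} =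
      {y : Fin m → H | (∀ i, y i ∈ C i) ∧
        ∀ z : Fin m → H, (∀ i, z i ∈ C i) → Φ y ≤ Φ z}

namespace VariationallyCharacterizesCycles

variable {Φ : (Fin m → H) → ℝ}

theorem lt_of_ne (hΦ : VariationallyCharacterizesCycles Φ) {a : Fin m → H} {j : Fin m}
    (hne : a j ≠ a (j + 1)) : Φ (update a j (a (j + 1))) < Φ a := by
  have hj : j + 1 ≠ j := fun h => hne (by rw [h])
  let C : Fin m → Set H := update (fun i => {a i}) j univ
  let P : Fin m → H → H := update (fun i _ => a i) j id
  have hsol := hΦ C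
    (fun i => by rcases eq_or_ne i j with rfl | hij <;> simp [C, *])
    (fun i => by rcases eq_or_ne i j with rfl | hij <;> simp [C, *])
    (fun i => by rcases eq_or_ne i j with rfl | hij <;> simp [C, convex_singleton, convex_univ, *])
    P (fun i => by
      rcases eq_or_ne i j with rfl | hij
      · simpa [C, P] using isProjOn_id_univ
      · simpa [C, P, hij] using isProjOn_const_singleton (a i))
  have hcycle : update a j (a (j + 1)) ∈ {y : Fin m → H | ∀ i, y i = P i (y (i + 1))} := by
    intro i
    rcases eq_or_ne i j with rfl | hij
    · simp [P, hj]
    · simp [P, hij]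
  have hnoncycle : a ∉ {y : Fin m → H | ∀ i, y i = P i (y (i + 1))} :=
    fun h => hne (by simpa [P] using h j)
  have hfeas : ∀ i, a i ∈ C i := fun i => by
    rcases eq_or_ne i j with rfl | hij <;> simp [C, *]
  rw [hsol] at hcycle hnoncycle
  obtain ⟨z, hz, hlt⟩ : ∃ z : Fin m → H, (∀ i, z i ∈ C i) ∧ Φ z < Φ a := by
    simpa [hfeas] using hnoncycle
  exact (hcycle.2 z hz).trans_lt hlt

theorem single_lt_single_add_one (hΦ : VariationallyCharacterizesCycles Φ) (hm : 3 ≤ m)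
    {u : H} (hu : u ≠ 0) (k : Fin m) : Φ (Pi.single k u) < Φ (Pi.single (k + 1) u) := by
  have hone : (1 : Fin m) ≠ 0 := by
    simp [Fin.ext_iff, Nat.mod_eq_of_lt (by omega : 1 < m)]
  have htwo : (1 + 1 : Fin m) ≠ 0 := by
    simp [Fin.ext_iff, Fin.val_add, Nat.mod_eq_of_lt (by omega : 1 < m),
      Nat.mod_eq_of_lt (by omega : 2 < m)]
  have h1 : k + 1 ≠ k := add_ne_left.2 hone
  have h2 : k + 1 + 1 ≠ k := by rw [add_assoc]; exact add_ne_left.2 htwo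
  have h3 : k + 1 + 1 ≠ k + 1 := add_ne_left.2 hone
  set g : Fin m → H := update (Pi.single (k + 1) u) k u
  calc Φ (Pi.single k u) = Φ (update g (k + 1) (g (k + 1 + 1))) := by
        congr 1
        ext i
        simp only [g, Pi.single_apply, update_apply]
        grind
    _ < Φ g := hΦ.lt_of_ne (a := g) (by simp [g, h1, h2, h3, hu])
    _ < Φ (Pi.single (k + 1) u) := by
      simpa [g] using hΦ.lt_of_ne (a := Pi.single (k + 1) u) (j := k) (by simp [h1.symm, hu.symm])

end VariationallyCharacterizesCycles

end

theorem stmt14_general {H : Type*} [NormedAddCommGroup H] [InnerProductSpace ℝ H]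
    (hdim : ∃ u v : H, LinearIndependent ℝ ![u, v])
    {m : ℕ} [NeZero m] (hm : 3 ≤ m) :
    ¬ ∃ Φ : (Fin m → H) → ℝ,
      ∀ C : Fin m → Set H,
        (∀ i, (C i).Nonempty) → (∀ i, IsClosed (C i)) → (∀ i, Convex ℝ (C i)) →
        ∀ P : Fin m → H → H, (∀ i, IsProjOn (P i) (C i)) →
          {y : Fin m → H | ∀ i : Fin m, y i = P i (y (i + 1))} =
          {y : Fin m → H | (∀ i, y i ∈ C i) ∧
            ∀ z : Fin m → H, (∀ i, z i ∈ C i) → Φ y ≤ Φ z} := by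
  rintro ⟨Φ, hΦ⟩
  obtain ⟨u, v, huv⟩ := hdim
  have hu : u ≠ 0 := by simpa using LinearIndependent.ne_zero 0 huv
  obtain ⟨k, hk⟩ := Finite.exists_max fun k : Fin m => Φ (Pi.single k u)
  exact (hk (k + 1)).not_gt (VariationallyCharacterizesCycles.single_lt_single_add_one hΦ hm hu k)

/-- Baillon–Combettes–Cominetti: for `dim H ≥ 2` and `m ≥ 3` there is no function
`Φ : Hᵐ → ℝ` such that, for every ordered family of nonempty closed convex subsets
`(C₁, …, C_m)`, the set of cycles `cyc(C₁, …, C_m)` is the solution set of the problem of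
minimizing `Φ` over `C₁ × ⋯ × C_m`.  (Indices are `0`-based with wrap-around: the cycle
conditions read `y i = P i (y (i+1))` for all `i : Fin m`.) -/
theorem stmt14 {H : Type*} [NormedAddCommGroup H] [InnerProductSpace ℝ H] [CompleteSpace H]
    (hdim : ∃ u v : H, LinearIndependent ℝ ![u, v])
    {m : ℕ} [NeZero m] (hm : 3 ≤ m) :
    ¬ ∃ Φ : (Fin m → H) → ℝ,
      ∀ C : Fin m → Set H,
        (∀ i, (C i).Nonempty) → (∀ i, IsClosed (C i)) → (∀ i, Convex ℝ (C i)) →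
        ∀ P : Fin m → H → H, (∀ i, IsProjOn (P i) (C i)) →
          {y : Fin m → H | ∀ i : Fin m, y i = P i (y (i + 1))} =
          {y : Fin m → H | (∀ i, y i ∈ C i) ∧
            ∀ z : Fin m → H, (∀ i, z i ∈ C i) → Φ y ≤ Φ z} :=
  stmt14_general hdim hm
end

section
/- Let A and B be closed linear subspaces of a real Hilbert space H with orthogonal projections P_A and P_B. For any x ∈ H, define b₀ := x and, for every integer n ≥ 1, aₙ := P_A(b_{n−1}) and bₙ := P_B(aₙ). Then both sequences (aₙ) and (bₙ) converge in norm to P_{A∩B}(x), the orthogonal projection of x onto A ∩ B. -/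
open Filter

/-! Put `T = P_A P_B P_A`, so that `a (n + 1) = Tⁿ (P_A x)`. `T` is symmetric with
`‖T z‖² ≤ ⟪T z, z⟫`, hence `s k = ⟪Tᵏ y, y⟫` is nonnegative and nonincreasing, and
`‖Tⁿ y - Tᵐ y‖² = s (2n) - 2 s (n + m) + s (2m)` makes `Tⁿ y` a Cauchy sequence. Its limit is
fixed by `T`, so neither projection shortens it and it lies in `A ∩ B`; and `⟪Tⁿ y, w⟫ = ⟪y, w⟫`
for `w ∈ A ∩ B`, so `y` minus the limit is orthogonal to `A ∩ B`: the limit is `P_{A∩B} y`.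
For `y = P_A x` this is `P_{A∩B} x`, and `bₙ = P_B aₙ` follows by continuity of `P_B`. -/

open Topology

local notation "⟪" x ", " y "⟫" => inner ℝ x y

theorem IsProjOn.eq_starProjection {𝕜 H : Type*} [RCLike 𝕜] [NormedAddCommGroup H]
    [InnerProductSpace 𝕜 H] {K : Submodule 𝕜 H} [K.HasOrthogonalProjection] {P : H → H}
    (hP : IsProjOn P K) (z : H) : P z = K.starProjection z := by
  obtain ⟨hmem, hle⟩ := hP z
  have hmin : ‖z - P z‖ = ⨅ w : K, ‖z - w‖ :=
    le_antisymm (le_ciInf fun w => hle w w.2)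
      (ciInf_le ⟨0, by rintro _ ⟨w, rfl⟩; positivity⟩ (⟨P z, hmem⟩ : K))
  exact (K.eq_starProjection_of_mem_of_inner_eq_zero hmem
    ((K.norm_eq_iInf_iff_inner_eq_zero hmem).1 hmin)).symm

section PowerIteration

variable {H : Type*} [NormedAddCommGroup H] [InnerProductSpace ℝ H] {T : H →L[ℝ] H}

theorem inner_pow_apply_pow_apply (hT : (T : H →ₗ[ℝ] H).IsSymmetric) (x : H) (n m : ℕ) :
    ⟪(T ^ n) x, (T ^ m) x⟫ = ⟪(T ^ (n + m)) x, x⟫ := by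
  induction m generalizing n with
  | zero => simp
  | succ m ih =>
    rw [pow_succ', mul_apply_eq_comp, ← ContinuousLinearMap.coe_coe T, ← hT,
      ContinuousLinearMap.coe_coe, ← mul_apply_eq_comp, ← pow_succ', ih,
      add_right_comm n 1 m, add_assoc]

theorem norm_apply_le_of_norm_sq_le_inner (hle : ∀ z, ‖T z‖ ^ 2 ≤ ⟪T z, z⟫) (z : H) :
    ‖T z‖ ≤ ‖z‖ := by
  have := (hle z).trans (real_inner_le_norm _ _)
  nlinarith [norm_nonneg (T z), norm_nonneg z]

theorem apply_eq_self_of_tendsto_pow_apply {x l : H}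
    (hl : Tendsto (fun n => (T ^ n) x) atTop (𝓝 l)) : T l = l := by
  refine tendsto_nhds_unique ((T.continuous.tendsto l).comp hl) ?_
  simpa only [Function.comp_def, pow_succ', mul_apply_eq_comp] using
    hl.comp (tendsto_add_atTop_nat 1)

-- For symmetric `T`, `hle` says `T² ≤ T`, i.e. `0 ≤ T ≤ 1`.
variable (hT : (T : H →ₗ[ℝ] H).IsSymmetric) (hle : ∀ z, ‖T z‖ ^ 2 ≤ ⟪T z, z⟫)
include hT

theorem inner_pow_two_mul_apply (x : H) (j : ℕ) :
    ⟪(T ^ (2 * j)) x, x⟫ = ‖(T ^ j) x‖ ^ 2 := by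
  rw [two_mul, ← inner_pow_apply_pow_apply hT, real_inner_self_eq_norm_sq]

theorem inner_pow_two_mul_add_one_apply (x : H) (j : ℕ) :
    ⟪(T ^ (2 * j + 1)) x, x⟫ = ⟪T ((T ^ j) x), (T ^ j) x⟫ := by
  rw [← mul_apply_eq_comp, ← pow_succ', inner_pow_apply_pow_apply hT]
  ring_nf

include hle

theorem inner_pow_apply_nonneg (x : H) (k : ℕ) : 0 ≤ ⟪(T ^ k) x, x⟫ := by
  obtain ⟨j, rfl | rfl⟩ := Nat.even_or_odd' k
  · rw [inner_pow_two_mul_apply hT]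
    positivity
  · rw [inner_pow_two_mul_add_one_apply hT]
    exact (sq_nonneg _).trans (hle _)

theorem antitone_inner_pow_apply (x : H) : Antitone fun k => ⟪(T ^ k) x, x⟫ := by
  refine antitone_nat_of_succ_le fun k => ?_
  obtain ⟨j, rfl | rfl⟩ := Nat.even_or_odd' k
  · rw [inner_pow_two_mul_add_one_apply hT, inner_pow_two_mul_apply hT, sq]
    exact (real_inner_le_norm _ _).trans
      (mul_le_mul_of_nonneg_right (norm_apply_le_of_norm_sq_le_inner hle _) (norm_nonneg _))
  · rw [show 2 * j + 1 + 1 = 2 * (j + 1) by ring, inner_pow_two_mul_apply hT,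
      inner_pow_two_mul_add_one_apply hT, pow_succ' T j, mul_apply_eq_comp]
    exact hle _

theorem cauchySeq_pow_apply (x : H) : CauchySeq fun n => (T ^ n) x := by
  set s : ℕ → ℝ := fun k => ⟪(T ^ k) x, x⟫
  obtain ⟨L, hL⟩ : ∃ L, Tendsto s atTop (𝓝 L) :=
    ⟨_, tendsto_atTop_ciInf (antitone_inner_pow_apply hT hle x)
      ⟨0, by rintro _ ⟨k, rfl⟩; exact inner_pow_apply_nonneg hT hle x k⟩⟩
  have hdist : ∀ n m,
      dist ((T ^ n) x) ((T ^ m) x) = √(s (n + n) - 2 * s (n + m) + s (m + m)) := by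
    intro n m
    rw [dist_eq_norm, ← Real.sqrt_sq (norm_nonneg _), norm_sub_sq_real]
    simp only [s, ← inner_pow_apply_pow_apply hT, real_inner_self_eq_norm_sq]
  have hs : ∀ f g : ℕ × ℕ → ℕ, Tendsto f atTop atTop → Tendsto g atTop atTop →
      Tendsto (fun p => s (f p + g p)) atTop (𝓝 L) := fun _ _ hf hg =>
    hL.comp (hf.atTop_add_atTop hg)
  have hfst : Tendsto (Prod.fst : ℕ × ℕ → ℕ) atTop atTop := by
    rw [← prod_atTop_atTop_eq]; exact tendsto_fst
  have hsnd : Tendsto (Prod.snd : ℕ × ℕ → ℕ) atTop atTop := by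
    rw [← prod_atTop_atTop_eq]; exact tendsto_snd
  have hlim := (((hs _ _ hfst hfst).sub ((hs _ _ hfst hsnd).const_mul 2)).add
    (hs _ _ hsnd hsnd)).sqrt
  rw [show L - 2 * L + L = 0 by ring, Real.sqrt_zero] at hlim
  rw [cauchySeq_iff_tendsto_dist_atTop_0]
  simpa only [hdist] using hlim

end PowerIteration

section AlternatingProjections

variable {H : Type*} [NormedAddCommGroup H] [InnerProductSpace ℝ H] (A B : Submodule ℝ H)
  [A.HasOrthogonalProjection] [B.HasOrthogonalProjection]

theorem isSymmetric_starProjection_mul_mul :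
    ((A.starProjection * B.starProjection * A.starProjection : H →L[ℝ] H) :
      H →ₗ[ℝ] H).IsSymmetric := by
  intro u v
  simp only [ContinuousLinearMap.coe_coe, mul_apply_eq_comp,
    Submodule.inner_starProjection_left_eq_right]

theorem norm_sq_starProjection_mul_mul_apply_le_inner (z : H) :
    ‖(A.starProjection * B.starProjection * A.starProjection) z‖ ^ 2 ≤
      ⟪(A.starProjection * B.starProjection * A.starProjection) z, z⟫ := by
  set y := B.starProjection (A.starProjection z)
  have hy : ⟪(A.starProjection * B.starProjection * A.starProjection) z, z⟫ = ‖y‖ ^ 2 := by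
    rw [mul_apply_eq_comp, mul_apply_eq_comp, A.inner_starProjection_left_eq_right,
      ← real_inner_self_eq_norm_sq, ← B.inner_starProjection_left_eq_right y,
      Submodule.starProjection_eq_self_iff.2 (B.starProjection_apply_mem _)]
  rw [hy, mul_apply_eq_comp, mul_apply_eq_comp]
  gcongr
  exact A.norm_starProjection_apply_le y

theorem mem_inf_of_starProjection_mul_mul_apply_eq_self {l : H}
    (hl : (A.starProjection * B.starProjection * A.starProjection) l = l) : l ∈ A ⊓ B := by
  have h₁ : ‖l‖ ≤ ‖B.starProjection (A.starProjection l)‖ := by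
    conv_lhs => rw [← hl]
    exact A.norm_starProjection_apply_le _
  have h₂ := B.norm_starProjection_apply_le (A.starProjection l)
  have hlA : l ∈ A := (A.mem_iff_norm_starProjection l).2
    (le_antisymm (A.norm_starProjection_apply_le l) (h₁.trans h₂))
  rw [Submodule.starProjection_eq_self_iff.2 hlA] at h₁ h₂
  exact ⟨hlA, (B.mem_iff_norm_starProjection l).2 (le_antisymm h₂ h₁)⟩

theorem starProjection_mul_mul_apply_of_mem_inf {w : H} (hw : w ∈ A ⊓ B) :
    (A.starProjection * B.starProjection * A.starProjection) w = w := by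
  simp [Submodule.starProjection_eq_self_iff.2 hw.1, Submodule.starProjection_eq_self_iff.2 hw.2]

theorem tendsto_pow_starProjection_mul_mul_apply [CompleteSpace H]
    [(A ⊓ B).HasOrthogonalProjection] (x : H) :
    Tendsto (fun n => ((A.starProjection * B.starProjection * A.starProjection) ^ n) x) atTop
      (𝓝 ((A ⊓ B).starProjection x)) := by
  set T := A.starProjection * B.starProjection * A.starProjection
  have hT := isSymmetric_starProjection_mul_mul A B
  obtain ⟨l, hl⟩ := cauchySeq_tendsto_of_complete
    (cauchySeq_pow_apply hT (norm_sq_starProjection_mul_mul_apply_le_inner A B) x)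
  have hlAB := mem_inf_of_starProjection_mul_mul_apply_eq_self A B
    (apply_eq_self_of_tendsto_pow_apply hl)
  have horth : ∀ w ∈ A ⊓ B, ⟪x - l, w⟫ = 0 := by
    intro w hw
    have hconst : ∀ n, ⟪(T ^ n) x, w⟫ = ⟪x, w⟫ := by
      intro n
      induction n with
      | zero => simp
      | succ n ih => rw [pow_succ', mul_apply_eq_comp, ← ContinuousLinearMap.coe_coe T, hT,
          ContinuousLinearMap.coe_coe, starProjection_mul_mul_apply_of_mem_inf A B hw, ih]
    have hlim : Tendsto (fun n => ⟪(T ^ n) x, w⟫) atTop (𝓝 ⟪l, w⟫) :=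
      hl.inner tendsto_const_nhds
    simp only [hconst, tendsto_const_nhds_iff] at hlim
    rw [inner_sub_left, hlim, sub_self]
  rw [Submodule.eq_starProjection_of_mem_of_inner_eq_zero hlAB horth]
  exact hl

theorem alternating_projections_eq_pow_apply {x : H} {a b : ℕ → H} (hb0 : b 0 = x)
    (ha : ∀ n, a (n + 1) = A.starProjection (b n))
    (hb : ∀ n, b (n + 1) = B.starProjection (a (n + 1))) (n : ℕ) :
    a (n + 1) = ((A.starProjection * B.starProjection * A.starProjection) ^ n)
      (A.starProjection x) := by
  induction n with
  | zero => rw [ha, hb0, pow_zero, one_apply_eq_self]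
  | succ n ih =>
    have hmem : A.starProjection (a (n + 1)) = a (n + 1) :=
      Submodule.starProjection_eq_self_iff.2 (ha n ▸ A.starProjection_apply_mem _)
    rw [pow_succ', mul_apply_eq_comp, ← ih, ha, hb, mul_apply_eq_comp, mul_apply_eq_comp, hmem]

end AlternatingProjections

/-- von Neumann: for two closed linear subspaces `A`, `B` of a real Hilbert space, both
alternating projection sequences `aₙ = P_A(b_{n−1})`, `bₙ = P_B(aₙ)` converge in norm to
`P_{A∩B}(x)`. -/
theorem stmt17 {H : Type*} [NormedAddCommGroup H] [InnerProductSpace ℝ H] [CompleteSpace H]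
    (A B : Submodule ℝ H) (hA : IsClosed (A : Set H)) (hB : IsClosed (B : Set H))
    (PA PB PAB : H → H)
    (hPA : IsProjOn PA (A : Set H)) (hPB : IsProjOn PB (B : Set H))
    (hPAB : IsProjOn PAB ((A ⊓ B : Submodule ℝ H) : Set H))
    (x : H) (a b : ℕ → H) (hb0 : b 0 = x)
    (ha : ∀ n : ℕ, a (n + 1) = PA (b n))
    (hbrec : ∀ n : ℕ, b (n + 1) = PB (a (n + 1))) :
    Tendsto (fun n : ℕ => a (n + 1)) atTop (nhds (PAB x)) ∧
    Tendsto (fun n : ℕ => b (n + 1)) atTop (nhds (PAB x)) := by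
  have : CompleteSpace A := hA.completeSpace_coe
  have : CompleteSpace B := hB.completeSpace_coe
  have hAB : IsClosed ((A ⊓ B : Submodule ℝ H) : Set H) := by
    rw [Submodule.coe_inf]
    exact hA.inter hB
  have : CompleteSpace ↥(A ⊓ B) := hAB.completeSpace_coe
  simp only [hPA.eq_starProjection, hPB.eq_starProjection, hPAB.eq_starProjection] at ha hbrec ⊢
  have hPx : (A ⊓ B).starProjection (A.starProjection x) = (A ⊓ B).starProjection x := by
    rw [← ContinuousLinearMap.comp_apply,
      Submodule.starProjection_comp_starProjection_of_le inf_le_left]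
  have hlim : Tendsto (fun n => a (n + 1)) atTop (𝓝 ((A ⊓ B).starProjection x)) := by
    simpa only [alternating_projections_eq_pow_apply A B hb0 ha hbrec, hPx] using
      tendsto_pow_starProjection_mul_mul_apply A B (A.starProjection x)
  have hPBx : B.starProjection ((A ⊓ B).starProjection x) = (A ⊓ B).starProjection x :=
    Submodule.starProjection_eq_self_iff.2 ((A ⊓ B).starProjection_apply_mem x).2
  refine ⟨hlim, ?_⟩
  simpa only [hbrec, hPBx, Function.comp_def] using
    (B.starProjection.continuous.tendsto _).comp hlim
end
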